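/- arXiv:2002.10088 — 12 statements merged into one kernel-verified Lean document; each statement's English description precedes it below -/
import Mathlib

section
/- For any field F, any n×n matrices A, B, B' with B and B' invertible upper triangular, and any i, j with 1 ≤ i ≤ n and 1 ≤ j ≤ n, the rank of the lower-left i×j submatrix of BAB' (rows n-i+1,...,n and columns 1,...,j) equals the rank of the corresponding lower-left i×j submatrix of A. -/
open Matrix

/-- Sum over Fin n of a function vanishing on indices < n - i reduces to a sum over Fin i. -/
private lemma sum_tail {F : Type*} [AddCommMonoid F] {n i : ℕ} (hin : i ≤ n)
    (f : Fin n → F) (hf : ∀ k : Fin n, k.1 < n - i → f k = 0) :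
    ∑ k, f k = ∑ a : Fin i, f ⟨n - i + a.1, by omega⟩ := by
  rw [← Equiv.sum_comp (finSumFinEquiv.trans (finCongr (by omega : n - i + i = n))) f,
    Fintype.sum_sum_type]
  have h1 : ∀ a : Fin (n - i),
      f ((finSumFinEquiv.trans (finCongr (by omega : n - i + i = n))) (Sum.inl a)) = 0 := by
    intro a
    apply hf
    simp only [Equiv.trans_apply, finSumFinEquiv_apply_left, finCongr_apply, Fin.coe_cast,
      Fin.coe_castAdd]
    exact a.2
  simp only [h1, Finset.sum_const_zero, zero_add]
  apply Finset.sum_congr rfl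
  intro a _
  congr 1

/-- Sum over Fin n of a function vanishing on indices ≥ j reduces to a sum over Fin j. -/
private lemma sum_head {F : Type*} [AddCommMonoid F] {n j : ℕ} (hjn : j ≤ n)
    (f : Fin n → F) (hf : ∀ k : Fin n, j ≤ k.1 → f k = 0) :
    ∑ k, f k = ∑ b : Fin j, f ⟨b.1, by omega⟩ := by
  rw [← Equiv.sum_comp (finSumFinEquiv.trans (finCongr (by omega : j + (n - j) = n))) f,
    Fintype.sum_sum_type]
  have h2 : ∀ a : Fin (n - j),
      f ((finSumFinEquiv.trans (finCongr (by omega : j + (n - j) = n))) (Sum.inr a)) = 0 := by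
    intro a
    apply hf
    simp only [Equiv.trans_apply, finSumFinEquiv_apply_right, finCongr_apply, Fin.coe_cast,
      Fin.coe_natAdd]
    omega
  simp only [h2, Finset.sum_const_zero, add_zero]
  apply Finset.sum_congr rfl
  intro a _
  congr 1

/-- An upper triangular invertible matrix has nonzero diagonal entries. -/
private lemma diag_ne_zero {F : Type*} [Field F] {n : ℕ} {B : Matrix (Fin n) (Fin n) F}
    (hB : ∀ i j : Fin n, j < i → B i j = 0) (hBu : IsUnit B) (k : Fin n) : B k k ≠ 0 := by
  have ht : B.BlockTriangular id := fun i j h => hB i j h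
  have hdet : B.det = ∏ i, B i i := Matrix.det_of_upperTriangular ht
  have : IsUnit B.det := (Matrix.isUnit_iff_isUnit_det B).mp hBu
  rw [hdet] at this
  intro h
  rw [isUnit_iff_ne_zero] at this
  exact this (Finset.prod_eq_zero (Finset.mem_univ k) h)

/-- Upper triangular with nonzero diagonal implies unit determinant. -/
private lemma isUnit_det_of_tri {F : Type*} [Field F] {m : ℕ} {C : Matrix (Fin m) (Fin m) F}
    (hC : ∀ i j : Fin m, j < i → C i j = 0) (hd : ∀ k, C k k ≠ 0) : IsUnit C.det := by
  have ht : C.BlockTriangular id := fun i j h => hC i j h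
  rw [Matrix.det_of_upperTriangular ht]
  exact isUnit_iff_ne_zero.mpr (Finset.prod_ne_zero_iff.mpr fun k _ => hd k)

/-- lower-left i×j ranks are invariant under multiplication by
invertible upper triangular matrices on both sides. -/
theorem lowerLeft_rank_invariant {F : Type*} [Field F] {n : ℕ}
    (A B B' : Matrix (Fin n) (Fin n) F)
    (hB : ∀ i j : Fin n, j < i → B i j = 0) (hBu : IsUnit B)
    (hB' : ∀ i j : Fin n, j < i → B' i j = 0) (hB'u : IsUnit B')
    (i j : ℕ) (hi1 : 1 ≤ i) (hin : i ≤ n) (hj1 : 1 ≤ j) (hjn : j ≤ n) :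
    (Matrix.of fun (a : Fin i) (b : Fin j) =>
        (B * A * B') ⟨n - i + a.1, by have := a.2; omega⟩ ⟨b.1, by have := b.2; omega⟩).rank =
    (Matrix.of fun (a : Fin i) (b : Fin j) =>
        A ⟨n - i + a.1, by have := a.2; omega⟩ ⟨b.1, by have := b.2; omega⟩).rank := by
  let ρ : Fin i → Fin n := fun a => ⟨n - i + a.1, by have := a.2; omega⟩
  let κ : Fin j → Fin n := fun b => ⟨b.1, by have := b.2; omega⟩
  let B₂ : Matrix (Fin i) (Fin i) F := Matrix.of fun a a' => B (ρ a) (ρ a')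
  let B₁ : Matrix (Fin j) (Fin j) F := Matrix.of fun b' b => B' (κ b') (κ b)
  let ALL : Matrix (Fin i) (Fin j) F := Matrix.of fun a b => A (ρ a) (κ b)
  have key : (Matrix.of fun (a : Fin i) (b : Fin j) => (B * A * B') (ρ a) (κ b)) =
      B₂ * ALL * B₁ := by
    ext a b
    simp only [Matrix.of_apply, Matrix.mul_apply, B₂, B₁, ALL]
    have h1 : ∀ l : Fin n, j ≤ l.1 →
        (∑ k, B (ρ a) k * A k l) * B' l (κ b) = 0 := by
      intro l hl
      rw [hB' l (κ b) (show (κ b) < l by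
        simp only [κ, Fin.lt_def]; exact lt_of_lt_of_le b.2 hl), mul_zero]
    rw [sum_head hjn _ h1]
    apply Finset.sum_congr rfl
    intro b' _
    have h2 : ∀ k : Fin n, k.1 < n - i →
        B (ρ a) k * A k ⟨b'.1, by omega⟩ = 0 := by
      intro k hk
      rw [hB (ρ a) k (show k < ρ a by
        simp only [ρ, Fin.lt_def]; omega), zero_mul]
    rw [sum_tail hin _ h2]
  have hd := diag_ne_zero hB hBu
  have hd' := diag_ne_zero hB' hB'u
  have hB₂u : IsUnit B₂.det := isUnit_det_of_tri
    (fun a a' h => hB (ρ a) (ρ a') (by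
      simp only [ρ, Fin.lt_def]
      exact Nat.add_lt_add_left h _))
    (fun k => hd (ρ k))
  have hB₁u : IsUnit B₁.det := isUnit_det_of_tri
    (fun x y h => hB' (κ x) (κ y) (by
      simp only [κ, Fin.lt_def]; exact h))
    (fun k => hd' (κ k))
  calc (Matrix.of fun a b => (B * A * B') (ρ a) (κ b)).rank
      = (B₂ * ALL * B₁).rank := by rw [key]
    _ = (B₂ * ALL).rank := Matrix.rank_mul_eq_left_of_isUnit_det B₁ (B₂ * ALL) hB₁u
    _ = ALL.rank := Matrix.rank_mul_eq_right_of_isUnit_det B₂ ALL hB₂u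
end

section
/- Every n×n matrix A over a field F can be written as A = B Q B' where B, B' are invertible upper triangular matrices and Q is a subpermutation matrix (each row and each column of Q has at most one nonzero entry, which equals 1). -/
open Matrix

namespace SubpermAux

variable {F : Type*} [Field F]

def eqv {k : ℕ} (r : Fin (k+1)) : Fin (k+1) ≃ Fin k ⊕ Unit :=
  (finSuccEquiv' r).trans (Equiv.optionEquivSumPUnit _)

lemma eqv_self {k : ℕ} (r : Fin (k+1)) : eqv r r = Sum.inr Unit.unit := by
  simp [eqv, finSuccEquiv'_at]

lemma eqv_succAbove {k : ℕ} (r : Fin (k+1)) (i : Fin k) :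
    eqv r (r.succAbove i) = Sum.inl i := by
  simp [eqv, finSuccEquiv'_succAbove]

def extM {m n : ℕ} (r : Fin (m+1)) (s : Fin (n+1)) (M : Matrix (Fin m) (Fin n) F) :
    Matrix (Fin (m+1)) (Fin (n+1)) F :=
  (fromBlocks M 0 0 (1 : Matrix Unit Unit F)).submatrix (eqv r) (eqv s)

@[simp] lemma extM_apply_self {m n : ℕ} (r : Fin (m+1)) (s : Fin (n+1))
    (M : Matrix (Fin m) (Fin n) F) : extM r s M r s = 1 := by
  simp [extM, eqv_self]

@[simp] lemma extM_apply_self_succAbove {m n : ℕ} (r : Fin (m+1)) (s : Fin (n+1))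
    (M : Matrix (Fin m) (Fin n) F) (j : Fin n) : extM r s M r (s.succAbove j) = 0 := by
  simp [extM, eqv_self, eqv_succAbove]

@[simp] lemma extM_apply_succAbove_self {m n : ℕ} (r : Fin (m+1)) (s : Fin (n+1))
    (M : Matrix (Fin m) (Fin n) F) (i : Fin m) : extM r s M (r.succAbove i) s = 0 := by
  simp [extM, eqv_self, eqv_succAbove]

@[simp] lemma extM_apply_succAbove_succAbove {m n : ℕ} (r : Fin (m+1)) (s : Fin (n+1))
    (M : Matrix (Fin m) (Fin n) F) (i : Fin m) (j : Fin n) :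
    extM r s M (r.succAbove i) (s.succAbove j) = M i j := by
  simp [extM, eqv_succAbove]

lemma extM_mul {m n p : ℕ} (r : Fin (m+1)) (s : Fin (n+1)) (t : Fin (p+1))
    (M : Matrix (Fin m) (Fin n) F) (N : Matrix (Fin n) (Fin p) F) :
    extM r s M * extM s t N = extM r t (M * N) := by
  unfold extM
  rw [submatrix_mul_equiv]
  simp [fromBlocks_multiply]

lemma extM_blockTriangular {k : ℕ} (r : Fin (k+1)) {M : Matrix (Fin k) (Fin k) F}
    (hM : M.BlockTriangular id) : (extM r r M).BlockTriangular id := by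
  intro i j hij
  rcases eq_or_ne i r with rfl | hi
  · obtain ⟨j', rfl⟩ := Fin.exists_succAbove_eq (show j ≠ i from ne_of_lt hij)
    simp
  · obtain ⟨i', rfl⟩ := Fin.exists_succAbove_eq hi
    rcases eq_or_ne j r with rfl | hj
    · simp
    · obtain ⟨j', rfl⟩ := Fin.exists_succAbove_eq hj
      rw [extM_apply_succAbove_succAbove]
      exact hM (by simpa [Fin.succAbove_lt_succAbove_iff] using hij)

lemma extM_isUnit {k : ℕ} (r : Fin (k+1)) {M : Matrix (Fin k) (Fin k) F}
    (hM : IsUnit M) : IsUnit (extM r r M) := by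
  rw [Matrix.isUnit_iff_isUnit_det] at hM ⊢
  unfold extM
  rw [det_submatrix_equiv_self, det_fromBlocks_zero₂₁]
  simpa using hM


def colCons {m n : ℕ} (X : Matrix (Fin m) (Fin n) F) : Matrix (Fin m) (Fin (n+1)) F :=
  Matrix.of fun i => Fin.cons 0 (X i)

@[simp] lemma colCons_apply_zero {m n : ℕ} (X : Matrix (Fin m) (Fin n) F) (i : Fin m) :
    colCons X i 0 = 0 := rfl

@[simp] lemma colCons_apply_succ {m n : ℕ} (X : Matrix (Fin m) (Fin n) F) (i : Fin m)
    (j : Fin n) : colCons X i j.succ = X i j := rfl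

lemma mul_colCons {m n : ℕ} (B : Matrix (Fin m) (Fin m) F) (X : Matrix (Fin m) (Fin n) F) :
    B * colCons X = colCons (B * X) := by
  ext i j
  induction j using Fin.cases with
  | zero => simp [Matrix.mul_apply]
  | succ j => simp [Matrix.mul_apply]

lemma colCons_mul_extM {m n : ℕ} (X : Matrix (Fin m) (Fin n) F)
    (Y : Matrix (Fin n) (Fin n) F) :
    colCons X * extM 0 0 Y = colCons (X * Y) := by
  have hsA : ∀ j : Fin n, (0 : Fin (n+1)).succAbove j = j.succ := fun j => Fin.zero_succAbove j
  ext i j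
  induction j using Fin.cases with
  | zero =>
    rw [Matrix.mul_apply, Fin.sum_univ_succ]
    simp only [colCons_apply_zero, colCons_apply_succ, zero_mul, zero_add]
    refine Finset.sum_eq_zero fun k _ => ?_
    rw [← hsA k, extM_apply_succAbove_self, mul_zero]
  | succ j =>
    rw [Matrix.mul_apply, Fin.sum_univ_succ]
    simp only [colCons_apply_zero, colCons_apply_succ, zero_mul, zero_add]
    rw [Matrix.mul_apply]
    refine Finset.sum_congr rfl fun k _ => ?_
    rw [← hsA k, ← hsA j, extM_apply_succAbove_succAbove]


theorem key (n : ℕ) : ∀ (m : ℕ) (A : Matrix (Fin m) (Fin n) F),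
    ∃ (B : Matrix (Fin m) (Fin m) F) (Q : Matrix (Fin m) (Fin n) F)
      (B' : Matrix (Fin n) (Fin n) F),
      B.BlockTriangular id ∧ IsUnit B ∧ B'.BlockTriangular id ∧ IsUnit B' ∧
      (∀ i j, Q i j = 0 ∨ Q i j = 1) ∧
      (∀ i j k, Q i j ≠ 0 → Q i k ≠ 0 → j = k) ∧
      (∀ i j k, Q i j ≠ 0 → Q k j ≠ 0 → i = k) ∧
      A = B * Q * B' := by
  induction n with
  | zero =>
    intro m A
    refine ⟨1, A, 1, Matrix.blockTriangular_one, isUnit_one, Matrix.blockTriangular_one,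
      isUnit_one, fun i j => j.elim0, fun i j => j.elim0, fun i j => j.elim0, by simp⟩
  | succ n ih =>
    intro m A
    by_cases hcol : ∀ i, A i 0 = 0
    · -- first column is zero
      obtain ⟨B, Q₂, B₂', hB, hBu, hB₂', hB₂'u, hq1, hq2, hq3, hfac⟩ :=
        ih m (A.submatrix id Fin.succ)
      refine ⟨B, colCons Q₂, extM 0 0 B₂', hB, hBu, extM_blockTriangular 0 hB₂',
        extM_isUnit 0 hB₂'u, ?_, ?_, ?_, ?_⟩
      · intro i j
        induction j using Fin.cases with
        | zero => exact Or.inl rfl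
        | succ j => exact hq1 i j
      · intro i j k hj hk
        induction j using Fin.cases with
        | zero => exact absurd rfl hj
        | succ j =>
          induction k using Fin.cases with
          | zero => exact absurd rfl hk
          | succ k => exact congrArg Fin.succ (hq2 i j k hj hk)
      · intro i j k hi hk
        induction j using Fin.cases with
        | zero => exact absurd rfl hi
        | succ j => exact hq3 i j k hi hk
      · rw [Matrix.mul_assoc, colCons_mul_extM, mul_colCons, ← Matrix.mul_assoc, ← hfac]
        ext i j
        induction j using Fin.cases with
        | zero => simpa using hcol i
        | succ j => simp
    · -- first column has a nonzero entry
      push_neg at hcol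
      obtain ⟨i₀, hi₀⟩ := hcol
      obtain ⟨m, rfl⟩ : ∃ m', m = m' + 1 :=
        ⟨m - 1, (Nat.succ_pred_eq_of_pos i₀.pos).symm⟩
      classical
      set S : Finset (Fin (m+1)) := Finset.univ.filter (fun i => A i 0 ≠ 0) with hS
      have hSne : S.Nonempty := ⟨i₀, by simp [hS, hi₀]⟩
      set r := S.max' hSne with hr
      have hrne : A r 0 ≠ 0 := by
        have := S.max'_mem hSne
        simpa [hS] using this
      have hmax : ∀ i, r < i → A i 0 = 0 := by
        intro i hi
        by_contra h
        exact absurd (S.le_max' i (by simp [hS, h])) (not_le.mpr hi)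
      set N : Matrix (Fin (m+1)) (Fin (m+1)) F :=
        Matrix.of (fun i j => if j = r ∧ i < r then -(A i 0) * (A r 0)⁻¹ else 0) with hN
      set B₁ := 1 + N with hB₁
      have hB₁tri : B₁.BlockTriangular id := by
        intro i j hij
        have hne : i ≠ j := ne_of_gt hij
        simp only [hB₁, Matrix.add_apply, Matrix.one_apply_ne hne, hN, Matrix.of_apply, zero_add]
        rw [if_neg]
        rintro ⟨rfl, h2⟩
        exact absurd (hij.trans h2) (lt_irrefl _)
      have hB₁diag : ∀ i, B₁ i i = 1 := by
        intro i
        simp only [hB₁, Matrix.add_apply, Matrix.one_apply_eq, hN, Matrix.of_apply]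
        rw [if_neg, add_zero]
        rintro ⟨rfl, h2⟩
        exact lt_irrefl _ h2
      have hB₁u : IsUnit B₁.det := by
        rw [Matrix.det_of_upperTriangular hB₁tri]
        simp [hB₁diag]
      set C := B₁ * A with hC
      have hC0 : ∀ i, C i 0 = if i = r then A r 0 else 0 := by
        intro i
        have h1 : C i 0 = A i 0 + (N * A) i 0 := by
          rw [hC, hB₁, Matrix.add_mul, Matrix.one_mul, Matrix.add_apply]
        have hNA : (N * A) i 0 = N i r * A r 0 := by
          rw [Matrix.mul_apply]
          refine Finset.sum_eq_single r (fun k _ hk => ?_) (by simp)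
          simp [hN, hk]
        rw [h1, hNA]
        rcases lt_trichotomy i r with h | h | h
        · rw [if_neg (ne_of_lt h)]
          have hNe : N i r = -(A i 0) * (A r 0)⁻¹ := by simp [hN, h]
          rw [hNe, mul_assoc, inv_mul_cancel₀ hrne, mul_one]
          exact add_neg_cancel _
        · subst h
          simp [hN]
        · rw [if_neg (ne_of_gt h), hmax i h]
          simp only [hN, Matrix.of_apply]
          rw [if_neg, zero_mul, add_zero]
          rintro ⟨-, h2⟩
          exact absurd (h.trans h2) (lt_irrefl _)
      have hCr0 : C r 0 = A r 0 := by rw [hC0]; simp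
      have hCr0ne : C r 0 ≠ 0 := by rw [hCr0]; exact hrne
      set B₁' : Matrix (Fin (n+1)) (Fin (n+1)) F :=
        Matrix.of (fun j k => if j = 0 then
            (if k = 0 then (C r 0)⁻¹ else -(C r k) * (C r 0)⁻¹)
          else if j = k then 1 else 0) with hB₁'
      have hB₁'tri : B₁'.BlockTriangular id := by
        intro j k hjk
        have hj0 : j ≠ 0 := by
          intro h
          subst h
          exact absurd hjk (Fin.not_lt_zero k)
        simp only [hB₁', Matrix.of_apply, if_neg hj0]
        exact if_neg (by rintro rfl; exact lt_irrefl _ hjk)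
      have hB₁'u : IsUnit B₁'.det := by
        rw [Matrix.det_of_upperTriangular hB₁'tri]
        rw [isUnit_iff_ne_zero, Finset.prod_ne_zero_iff]
        intro j _
        rcases eq_or_ne j 0 with rfl | hj
        · simp only [hB₁', Matrix.of_apply, if_pos rfl]
          exact inv_ne_zero hCr0ne
        · simp only [hB₁', Matrix.of_apply, if_neg hj, if_pos rfl]
          exact one_ne_zero
      set D := C * B₁' with hD
      have hD0 : ∀ i, D i 0 = if i = r then 1 else 0 := by
        intro i
        have h1 : D i 0 = C i 0 * (C r 0)⁻¹ := by
          rw [hD, Matrix.mul_apply]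
          refine Finset.sum_eq_single 0 (fun k _ hk => ?_) (by simp)
          simp [hB₁', hk]
        rw [h1, hC0]
        rcases eq_or_ne i r with rfl | hi
        · rw [if_pos rfl, if_pos rfl, ← hCr0, mul_inv_cancel₀ hCr0ne]
        · rw [if_neg hi, if_neg hi, zero_mul]
      have hDr : ∀ k, D r k = if k = 0 then 1 else 0 := by
        intro k
        rw [hD, Matrix.mul_apply, Fin.sum_univ_succ]
        induction k using Fin.cases with
        | zero =>
          rw [if_pos rfl]
          have htail : ∀ j' : Fin n, C r j'.succ * B₁' j'.succ 0 = 0 := by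
            intro j'
            simp [hB₁', Fin.succ_ne_zero]
          rw [Finset.sum_eq_zero (fun j' _ => htail j'), add_zero]
          simp only [hB₁', Matrix.of_apply, if_pos rfl]
          exact mul_inv_cancel₀ hCr0ne
        | succ k' =>
          rw [if_neg (Fin.succ_ne_zero k')]
          have h0 : B₁' 0 k'.succ = -(C r k'.succ) * (C r 0)⁻¹ := by
            simp [hB₁', Fin.succ_ne_zero]
          have htail : ∀ j' : Fin n, C r j'.succ * B₁' j'.succ k'.succ
              = if j' = k' then C r j'.succ else 0 := by
            intro j'
            rcases eq_or_ne j' k' with rfl | hj'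
            · simp [hB₁', Fin.succ_ne_zero]
            · simp [hB₁', Fin.succ_ne_zero, hj', Fin.succ_inj.not.mpr hj']
          rw [Finset.sum_congr rfl (fun j' _ => htail j'), Finset.sum_ite_eq' Finset.univ k',
            if_pos (Finset.mem_univ k'), h0]
          rw [mul_comm (C r 0), mul_assoc, inv_mul_cancel₀ hCr0ne, mul_one]
          exact neg_add_cancel _
      have hDfact : D = extM r 0 (D.submatrix r.succAbove Fin.succ) := by
        ext i j
        rcases eq_or_ne i r with rfl | hi
        · rcases eq_or_ne j 0 with rfl | hj
          · rw [extM_apply_self, hDr, if_pos rfl]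
          · obtain ⟨j', rfl⟩ := Fin.exists_succAbove_eq hj
            rw [extM_apply_self_succAbove, hDr, Fin.zero_succAbove, if_neg (Fin.succ_ne_zero j')]
        · obtain ⟨i', rfl⟩ := Fin.exists_succAbove_eq hi
          rcases eq_or_ne j 0 with rfl | hj
          · rw [extM_apply_succAbove_self, hD0, if_neg hi]
          · obtain ⟨j', rfl⟩ := Fin.exists_succAbove_eq hj
            rw [extM_apply_succAbove_succAbove, Matrix.submatrix_apply, Fin.zero_succAbove]
      obtain ⟨B₂, Q₂, B₂', hB₂, hB₂u, hB₂', hB₂'u, hq1, hq2, hq3, hfac2⟩ :=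
        ih m (D.submatrix r.succAbove Fin.succ)
      have hDe : D = extM r r B₂ * (extM r 0 Q₂ * extM 0 0 B₂') := by
        rw [extM_mul r (0 : Fin (n+1)) (0 : Fin (n+1)), extM_mul r r (0 : Fin (n+1)),
          ← Matrix.mul_assoc, ← hfac2, ← hDfact]
      haveI : Invertible B₁ := B₁.invertibleOfIsUnitDet hB₁u
      haveI : Invertible B₁' := B₁'.invertibleOfIsUnitDet hB₁'u
      have hA : A = B₁⁻¹ * D * B₁'⁻¹ := by
        rw [hD, hC]
        simp only [Matrix.mul_assoc]
        rw [Matrix.mul_nonsing_inv _ hB₁'u, Matrix.mul_one, ← Matrix.mul_assoc,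
          Matrix.nonsing_inv_mul _ hB₁u, Matrix.one_mul]
      have hB₁invtri : (B₁⁻¹).BlockTriangular id :=
        Matrix.blockTriangular_inv_of_blockTriangular hB₁tri
      have hB₁'invtri : (B₁'⁻¹).BlockTriangular id :=
        Matrix.blockTriangular_inv_of_blockTriangular hB₁'tri
      have hB₁invu : IsUnit B₁⁻¹ :=
        Matrix.isUnit_nonsing_inv_iff.mpr (Matrix.isUnit_iff_isUnit_det _ |>.mpr hB₁u)
      have hB₁'invu : IsUnit B₁'⁻¹ :=
        Matrix.isUnit_nonsing_inv_iff.mpr (Matrix.isUnit_iff_isUnit_det _ |>.mpr hB₁'u)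
      refine ⟨B₁⁻¹ * extM r r B₂, extM r 0 Q₂, extM 0 0 B₂' * B₁'⁻¹,
        hB₁invtri.mul (extM_blockTriangular r hB₂),
        hB₁invu.mul (extM_isUnit r hB₂u),
        (extM_blockTriangular 0 hB₂').mul hB₁'invtri,
        (extM_isUnit 0 hB₂'u).mul hB₁'invu, ?_, ?_, ?_, ?_⟩
      · intro i j
        rcases eq_or_ne i r with rfl | hi
        · rcases eq_or_ne j 0 with rfl | hj
          · rw [extM_apply_self]; exact Or.inr rfl
          · obtain ⟨j', rfl⟩ := Fin.exists_succAbove_eq hj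
            rw [extM_apply_self_succAbove]; exact Or.inl rfl
        · obtain ⟨i', rfl⟩ := Fin.exists_succAbove_eq hi
          rcases eq_or_ne j 0 with rfl | hj
          · rw [extM_apply_succAbove_self]; exact Or.inl rfl
          · obtain ⟨j', rfl⟩ := Fin.exists_succAbove_eq hj
            rw [extM_apply_succAbove_succAbove]; exact hq1 i' j'
      · intro i j k hj hk
        rcases eq_or_ne i r with rfl | hi
        · have hj0 : j = 0 := by
            by_contra h
            obtain ⟨j', rfl⟩ := Fin.exists_succAbove_eq h
            exact hj (extM_apply_self_succAbove r 0 Q₂ j')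
          have hk0 : k = 0 := by
            by_contra h
            obtain ⟨k', rfl⟩ := Fin.exists_succAbove_eq h
            exact hk (extM_apply_self_succAbove r 0 Q₂ k')
          rw [hj0, hk0]
        · obtain ⟨i', rfl⟩ := Fin.exists_succAbove_eq hi
          have hj0 : j ≠ 0 := by
            rintro rfl
            exact hj (extM_apply_succAbove_self r 0 Q₂ i')
          have hk0 : k ≠ 0 := by
            rintro rfl
            exact hk (extM_apply_succAbove_self r 0 Q₂ i')
          obtain ⟨j', rfl⟩ := Fin.exists_succAbove_eq hj0
          obtain ⟨k', rfl⟩ := Fin.exists_succAbove_eq hk0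
          rw [extM_apply_succAbove_succAbove] at hj hk
          rw [hq2 i' j' k' hj hk]
      · intro i j k hi hk
        rcases eq_or_ne j 0 with rfl | hj
        · have hi0 : i = r := by
            by_contra h
            obtain ⟨i', rfl⟩ := Fin.exists_succAbove_eq h
            exact hi (extM_apply_succAbove_self r 0 Q₂ i')
          have hk0 : k = r := by
            by_contra h
            obtain ⟨k', rfl⟩ := Fin.exists_succAbove_eq h
            exact hk (extM_apply_succAbove_self r 0 Q₂ k')
          rw [hi0, hk0]
        · obtain ⟨j', rfl⟩ := Fin.exists_succAbove_eq hj
          have hi0 : i ≠ r := by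
            rintro rfl
            exact hi (extM_apply_self_succAbove r 0 Q₂ j')
          have hk0 : k ≠ r := by
            rintro rfl
            exact hk (extM_apply_self_succAbove r 0 Q₂ j')
          obtain ⟨i', rfl⟩ := Fin.exists_succAbove_eq hi0
          obtain ⟨k', rfl⟩ := Fin.exists_succAbove_eq hk0
          rw [extM_apply_succAbove_succAbove] at hi hk
          rw [hq3 i' j' k' hi hk]
      · rw [hA, hDe]
        simp only [Matrix.mul_assoc]

end SubpermAux

/-- every square matrix over a field factors as B * Q * B' with B, B'
invertible upper triangular and Q a subpermutation matrix. -/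
theorem exists_subpermutation_double_coset {F : Type*} [Field F] {n : ℕ}
    (A : Matrix (Fin n) (Fin n) F) :
    ∃ B Q B' : Matrix (Fin n) (Fin n) F,
      (∀ i j : Fin n, j < i → B i j = 0) ∧ IsUnit B ∧
      (∀ i j : Fin n, j < i → B' i j = 0) ∧ IsUnit B' ∧
      (∀ i j : Fin n, Q i j = 0 ∨ Q i j = 1) ∧
      (∀ i j k : Fin n, Q i j ≠ 0 → Q i k ≠ 0 → j = k) ∧
      (∀ i j k : Fin n, Q i j ≠ 0 → Q k j ≠ 0 → i = k) ∧
      A = B * Q * B' := by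
  obtain ⟨B, Q, B', hB, hBu, hB', hB'u, h1, h2, h3, hfac⟩ := SubpermAux.key n n A
  exact ⟨B, Q, B', fun i j h => hB h, hBu, fun i j h => hB' h, hB'u, h1, h2, h3, hfac⟩
end

section
/- If Q and Q' are n×n subpermutation matrices over a field F lying in the same (B_n, B_n) double coset (i.e., Q' = B Q B' for some invertible upper triangular B, B'), then Q = Q'. -/
/-!
For an upper set `s` and a lower set `t` of indices, the rank of the corner of a matrix `M`
cut out by rows in `s` and columns in `t` does not change when `M` is multiplied on either side
by an invertible upper triangular matrix: such a matrix and its inverse act on the relevant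
coordinate subspaces without mixing in the discarded ones. For a subpermutation matrix this rank
is the number of nonzero entries in the corner, and inclusion–exclusion over the four corners
with rows `≥ a` or `> a` and columns `≤ b` or `< b` isolates the entry at `(a, b)`.
-/

open Finset

namespace Matrix

section Compression

variable {m n R : Type*} [CommRing R] [StrongRankCondition R]

theorem rank_mul_mul_eq_of_compress_left [Fintype m] [Fintype n] [DecidableEq m]
    {P B C : Matrix m m R} (Y : Matrix m n R)
    (hB : P * B * P = P * B) (hC : P * C * P = P * C) (hCB : C * B = 1) :
    (P * B * Y).rank = (P * Y).rank := by
  refine le_antisymm ?_ ?_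
  · calc (P * B * Y).rank = (P * B * (P * Y)).rank := by rw [← Matrix.mul_assoc, hB]
      _ ≤ (P * Y).rank := rank_mul_le_right _ _
  · calc (P * Y).rank = (P * C * (P * B * Y)).rank := by
          rw [← Matrix.mul_assoc, ← Matrix.mul_assoc, hC, Matrix.mul_assoc P C B, hCB,
            Matrix.mul_one]
      _ ≤ (P * B * Y).rank := rank_mul_le_right _ _

theorem rank_mul_mul_eq_of_compress_right [Fintype n] [DecidableEq n]
    {P B C : Matrix n n R} (Y : Matrix m n R)
    (hB : P * B * P = B * P) (hC : P * C * P = C * P) (hBC : B * C = 1) :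
    (Y * B * P).rank = (Y * P).rank := by
  refine le_antisymm ?_ ?_
  · calc (Y * B * P).rank = (Y * P * (B * P)).rank := by
          rw [Matrix.mul_assoc Y P, ← Matrix.mul_assoc P, hB, Matrix.mul_assoc]
      _ ≤ (Y * P).rank := rank_mul_le_left _ _
  · calc (Y * P).rank = (Y * B * P * (C * P)).rank := by
          rw [Matrix.mul_assoc (Y * B), ← Matrix.mul_assoc P, hC, Matrix.mul_assoc Y B,
            ← Matrix.mul_assoc B, hBC, Matrix.one_mul]
      _ ≤ (Y * B * P).rank := rank_mul_le_left _ _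

end Compression

theorem rank_eq_card_ne_zero {F m n : Type*} [Field F] [Fintype m] [Fintype n]
    (M : Matrix m n F)
    (hrow : ∀ i j k, M i j ≠ 0 → M i k ≠ 0 → j = k)
    (hcol : ∀ i j k, M i j ≠ 0 → M k j ≠ 0 → i = k) :
    M.rank = Nat.card {p : m × n // M p.1 p.2 ≠ 0} := by
  classical
  let v : {p : m × n // M p.1 p.2 ≠ 0} → m → F := fun p => M.col p.1.2
  have hspan : Submodule.span F (Set.range M.col) = Submodule.span F (Set.range v) := by
    refine le_antisymm (Submodule.span_le.mpr ?_) (Submodule.span_mono ?_)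
    · rintro _ ⟨j, rfl⟩
      by_cases hj : ∃ i, M i j ≠ 0
      · obtain ⟨i, hi⟩ := hj
        exact Submodule.subset_span ⟨⟨(i, j), hi⟩, rfl⟩
      · push Not at hj
        rw [show M.col j = 0 from funext hj]
        exact Submodule.zero_mem _
    · rintro _ ⟨p, rfl⟩
      exact ⟨p.1.2, rfl⟩
  -- Row `p.1.1` of a vanishing combination of the columns `v q` only sees the term `q = p`.
  have hli : LinearIndependent F v := by
    rw [Fintype.linearIndependent_iff]
    intro g hg p
    have hrowp := congrFun hg p.1.1
    simp only [Finset.sum_apply, Pi.smul_apply, smul_eq_mul, Pi.zero_apply, v, col_apply]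
      at hrowp
    rw [Finset.sum_eq_single p] at hrowp
    · exact (mul_eq_zero.mp hrowp).resolve_right p.2
    · intro q _ hqp
      refine mul_eq_zero_of_right _ (not_not.mp fun hq => hqp ?_)
      have hj : q.1.2 = p.1.2 := hrow _ _ _ hq p.2
      exact Subtype.ext (Prod.ext (hcol _ _ _ q.2 hq) hj)
    · simp
  rw [rank_eq_finrank_span_cols, hspan, finrank_span_eq_card hli, Nat.card_eq_fintype_card]

section Corner

variable {ι R : Type*} [Fintype ι] [DecidableEq ι] [CommRing R]

def projOn (s : Finset ι) : Matrix ι ι R :=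
  diagonal fun a => if a ∈ s then 1 else 0

def corner (s t : Finset ι) (M : Matrix ι ι R) : Matrix ι ι R :=
  projOn s * M * projOn t

theorem corner_apply (s t : Finset ι) (M : Matrix ι ι R) (a b : ι) :
    corner s t M a b = if a ∈ s ∧ b ∈ t then M a b else 0 := by
  by_cases ha : a ∈ s <;> by_cases hb : b ∈ t <;> simp [corner, projOn, ha, hb]

theorem projOn_mul_mul_projOn_of_isUpperSet [LinearOrder ι] {s : Finset ι}
    (hs : IsUpperSet (s : Set ι)) {B : Matrix ι ι R} (hB : B.BlockTriangular id) :
    projOn s * B * projOn s = projOn s * B := by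
  ext a c
  by_cases ha : a ∈ s <;> by_cases hc : c ∈ s <;> simp [projOn, ha, hc]
  exact (hB (lt_of_not_ge fun h => hc (hs h ha))).symm

theorem projOn_mul_mul_projOn_of_isLowerSet [LinearOrder ι] {t : Finset ι}
    (ht : IsLowerSet (t : Set ι)) {B : Matrix ι ι R} (hB : B.BlockTriangular id) :
    projOn t * B * projOn t = B * projOn t := by
  ext d b
  by_cases hd : d ∈ t <;> by_cases hb : b ∈ t <;> simp [projOn, hd, hb]
  exact (hB (lt_of_not_ge fun h => hd (ht h hb))).symm

theorem rank_corner_mul_mul [LinearOrder ι] [StrongRankCondition R] {s t : Finset ι}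
    (hs : IsUpperSet (s : Set ι)) (ht : IsLowerSet (t : Set ι)) {B B' : Matrix ι ι R}
    (hB : B.BlockTriangular id) (hBu : IsUnit B) (hB' : B'.BlockTriangular id)
    (hB'u : IsUnit B') (M : Matrix ι ι R) :
    (corner s t (B * M * B')).rank = (corner s t M).rank := by
  let := hBu.invertible
  let := hB'u.invertible
  calc (corner s t (B * M * B')).rank = (projOn s * B * (M * B' * projOn t)).rank := by
        simp only [corner, Matrix.mul_assoc]
    _ = (projOn s * (M * B' * projOn t)).rank :=
        rank_mul_mul_eq_of_compress_left _ (projOn_mul_mul_projOn_of_isUpperSet hs hB)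
          (projOn_mul_mul_projOn_of_isUpperSet hs (blockTriangular_inv_of_blockTriangular hB))
          (inv_mul_of_invertible B)
    _ = (projOn s * M * B' * projOn t).rank := by simp only [Matrix.mul_assoc]
    _ = (corner s t M).rank :=
        rank_mul_mul_eq_of_compress_right _ (projOn_mul_mul_projOn_of_isLowerSet ht hB')
          (projOn_mul_mul_projOn_of_isLowerSet ht (blockTriangular_inv_of_blockTriangular hB'))
          (mul_inv_of_invertible B')

end Corner

section SupportCount

variable {ι F : Type*} [Field F] [DecidableEq F]

def supportCount (M : Matrix ι ι F) (s t : Finset ι) : ℕ :=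
  #{p ∈ s ×ˢ t | M p.1 p.2 ≠ 0}

theorem rank_corner_eq_supportCount [Fintype ι] [DecidableEq ι] (M : Matrix ι ι F)
    (hrow : ∀ i j k, M i j ≠ 0 → M i k ≠ 0 → j = k)
    (hcol : ∀ i j k, M i j ≠ 0 → M k j ≠ 0 → i = k) (s t : Finset ι) :
    (corner s t M).rank = supportCount M s t := by
  have hne {a b : ι} (h : corner s t M a b ≠ 0) : M a b ≠ 0 :=
    fun hM => h (by simp [corner_apply, hM])
  rw [rank_eq_card_ne_zero _ (fun i j k hj hk => hrow i j k (hne hj) (hne hk))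
      (fun i j k hi hk => hcol i j k (hne hi) (hne hk)), Nat.card_eq_fintype_card,
    Fintype.card_subtype, supportCount]
  congr 1
  ext p
  simp [corner_apply, and_assoc]

theorem supportCount_Ici_Iic_add [LinearOrder ι] [LocallyFiniteOrderTop ι]
    [LocallyFiniteOrderBot ι] (M : Matrix ι ι F) (a b : ι) :
    supportCount M (Ici a) (Iic b) + supportCount M (Ioi a) (Iio b) =
      (if M a b ≠ 0 then 1 else 0) + supportCount M (Ici a) (Iio b) +
        supportCount M (Ioi a) (Iic b) := by
  simp only [supportCount, card_filter, sum_product, Ici_eq_cons_Ioi, Iic_eq_cons_Iio, sum_cons,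
    sum_add_distrib]
  ring

end SupportCount

end Matrix

open Matrix in
/-- two subpermutation matrices in the same (B_n, B_n) double coset
are equal. -/
theorem subpermutation_double_coset_unique {F : Type*} [Field F] {n : ℕ}
    (Q Q' : Matrix (Fin n) (Fin n) F)
    (hQ01 : ∀ i j : Fin n, Q i j = 0 ∨ Q i j = 1)
    (hQrow : ∀ i j k : Fin n, Q i j ≠ 0 → Q i k ≠ 0 → j = k)
    (hQcol : ∀ i j k : Fin n, Q i j ≠ 0 → Q k j ≠ 0 → i = k)
    (hQ'01 : ∀ i j : Fin n, Q' i j = 0 ∨ Q' i j = 1)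
    (hQ'row : ∀ i j k : Fin n, Q' i j ≠ 0 → Q' i k ≠ 0 → j = k)
    (hQ'col : ∀ i j k : Fin n, Q' i j ≠ 0 → Q' k j ≠ 0 → i = k)
    (B B' : Matrix (Fin n) (Fin n) F)
    (hB : ∀ i j : Fin n, j < i → B i j = 0) (hBu : IsUnit B)
    (hB' : ∀ i j : Fin n, j < i → B' i j = 0) (hB'u : IsUnit B')
    (hcoset : Q' = B * Q * B') :
    Q = Q' := by
  classical
  have hcount (s t : Finset (Fin n)) (hs : IsUpperSet (s : Set (Fin n)))
      (ht : IsLowerSet (t : Set (Fin n))) : supportCount Q s t = supportCount Q' s t := by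
    rw [← rank_corner_eq_supportCount Q hQrow hQcol,
      ← rank_corner_eq_supportCount Q' hQ'row hQ'col, hcoset,
      rank_corner_mul_mul hs ht (fun i j => hB i j) hBu (fun i j => hB' i j) hB'u]
  ext a b
  have hind : (if Q a b ≠ 0 then 1 else 0) = (if Q' a b ≠ 0 then 1 else 0) := by
    have hQ := supportCount_Ici_Iic_add Q a b
    have hQ' := supportCount_Ici_Iic_add Q' a b
    have hIci := coe_Ici a ▸ isUpperSet_Ici a
    have hIoi := coe_Ioi a ▸ isUpperSet_Ioi a
    have hIic := coe_Iic b ▸ isLowerSet_Iic b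
    have hIio := coe_Iio b ▸ isLowerSet_Iio b
    rw [hcount _ _ hIci hIic, hcount _ _ hIoi hIio, hcount _ _ hIci hIio,
      hcount _ _ hIoi hIic] at hQ
    omega
  rcases hQ01 a b with h | h <;> rcases hQ'01 a b with h' | h' <;> simp [h, h'] at hind ⊢
end

section
/- Let Q be an n×n subpermutation matrix and let A be any n×n matrix over a field F. If for every i, j ∈ [n] the rank of the lower-left i×j submatrix of A equals that of Q, then the (n-i+1, j) entry of Q equals r^{i,j}(A) - r^{i-1,j}(A) - r^{i,j-1}(A) + r^{i-1,j-1}(A), where r^{i,j}(A) denotes the rank of the lower-left i×j submatrix of A (with r^{0,j} = r^{i,0} = 0). -/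
/-- Rank of the lower-left i×j submatrix of A (rows {n-i+1,...,n}, columns {1,...,j},
one-indexed), with `r^{0,j} = r^{i,0} = 0`. -/
noncomputable def llrank {F : Type*} [Field F] {n : ℕ}
    (A : Matrix (Fin n) (Fin n) F) (i j : ℕ) : ℕ :=
  (Matrix.of fun (a : Fin (min i n)) (b : Fin (min j n)) =>
    A ⟨n - min i n + a.1, by have := a.2; omega⟩ ⟨b.1, by have := b.2; omega⟩).rank

/-!
If a matrix has at most one nonzero entry in each row and in each column, its rank is the
number of its nonzero entries: these entries form a nonsingular diagonal submatrix, and the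
rows containing them span the row space. Hence `llrank Q i j` counts the nonzero entries of `Q`
in the lower-left `i × j` corner, and the mixed second difference of such corner counts is the
number of nonzero entries in the single cell `(n - i, j - 1)`, which for a 0/1 matrix is that
entry itself.
-/

open Finset

namespace Matrix

variable {F m k : Type*} [Field F] [Fintype m] [Fintype k] [DecidableEq F]

theorem rank_le_card_support (M : Matrix m k F) :
    M.rank ≤ #{p : m × k | M p.1 p.2 ≠ 0} := by
  classical
  refine (M.rank_le_card_of_support_subset
    (({p | M p.1 p.2 ≠ 0} : Finset (m × k)).image Prod.fst) ?_).trans card_image_le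
  intro a ha
  obtain ⟨b, hb⟩ := Function.ne_iff.mp ha
  exact mem_image.mpr ⟨(a, b), by simpa using hb, rfl⟩

theorem card_support_le_rank (M : Matrix m k F)
    (hrow : ∀ a b b', M a b ≠ 0 → M a b' ≠ 0 → b = b')
    (hcol : ∀ a a' b, M a b ≠ 0 → M a' b ≠ 0 → a = a') :
    #{p : m × k | M p.1 p.2 ≠ 0} ≤ M.rank := by
  classical
  let S := {p : m × k // M p.1 p.2 ≠ 0}
  have hdiag : M.submatrix (fun s : S => s.1.1) (fun s : S => s.1.2) =
      diagonal fun s => M s.1.1 s.1.2 := by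
    ext s t
    by_cases hst : s = t
    · simp [hst]
    · rw [submatrix_apply, diagonal_apply_ne _ hst]
      by_contra h
      exact hst (Subtype.ext (Prod.ext (hcol _ _ _ h t.2) (hrow _ _ _ s.2 h)))
  calc #{p : m × k | M p.1 p.2 ≠ 0} = Fintype.card {s : S // M s.1.1 s.1.2 ≠ 0} := by
        rw [Fintype.card_congr (Equiv.subtypeUnivEquiv fun s => s.2), Fintype.card_subtype]
    _ = (M.submatrix (fun s : S => s.1.1) (fun s : S => s.1.2)).rank := by
        rw [hdiag, rank_diagonal]
    _ ≤ M.rank := rank_submatrix_le _ _ _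

theorem rank_eq_card_support (M : Matrix m k F)
    (hrow : ∀ a b b', M a b ≠ 0 → M a b' ≠ 0 → b = b')
    (hcol : ∀ a a' b, M a b ≠ 0 → M a' b ≠ 0 → a = a') :
    M.rank = #{p : m × k | M p.1 p.2 ≠ 0} :=
  le_antisymm M.rank_le_card_support (M.card_support_le_rank hrow hcol)

end Matrix

theorem card_quadrant_second_diff {α : Type*} [Fintype α] (P : α → Prop) [DecidablePred P]
    (u v : α → ℕ) (x y : ℕ) :
    (#{p | P p ∧ x ≤ u p ∧ v p < y + 1} : ℤ) - #{p | P p ∧ x + 1 ≤ u p ∧ v p < y + 1}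
      - #{p | P p ∧ x ≤ u p ∧ v p < y} + #{p | P p ∧ x + 1 ≤ u p ∧ v p < y}
      = #{p | P p ∧ u p = x ∧ v p = y} := by
  simp only [card_filter, Nat.cast_sum, Nat.cast_ite, Nat.cast_one, Nat.cast_zero,
    ← sum_sub_distrib, ← sum_add_distrib]
  refine sum_congr rfl fun p _ => ?_
  by_cases hP : P p
  · simp only [hP, true_and]
    split_ifs <;> omega
  · simp [hP]

section llrank

variable {F : Type*} [Field F] {n : ℕ}

theorem llrank_zero_left (B : Matrix (Fin n) (Fin n) F) (j : ℕ) : llrank B 0 j = 0 :=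
  Nat.le_zero.mp ((Matrix.rank_le_card_height _).trans (by simp))

theorem llrank_zero_right (B : Matrix (Fin n) (Fin n) F) (i : ℕ) : llrank B i 0 = 0 :=
  Nat.le_zero.mp ((Matrix.rank_le_card_width _).trans (by simp))

theorem llrank_eq_card_support [DecidableEq F] (Q : Matrix (Fin n) (Fin n) F)
    (hrow : ∀ i j k, Q i j ≠ 0 → Q i k ≠ 0 → j = k)
    (hcol : ∀ i j k, Q i j ≠ 0 → Q k j ≠ 0 → i = k) (i j : ℕ) :
    llrank Q i j = #{p : Fin n × Fin n | Q p.1 p.2 ≠ 0 ∧ n - i ≤ p.1 ∧ (p.2 : ℕ) < j} := by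
  set r : Fin (min i n) → Fin n := fun a => ⟨n - min i n + a, by omega⟩ with hr
  set c : Fin (min j n) → Fin n := fun b => ⟨b, by omega⟩ with hc
  have hr_inj : r.Injective := fun a a' h => Fin.ext (by simpa [hr] using h)
  have hc_inj : c.Injective := fun b b' h => Fin.ext (by simpa [hc] using h)
  rw [llrank, show Matrix.of _ = Q.submatrix r c from rfl,
    Matrix.rank_eq_card_support (Q.submatrix r c) (fun a b b' h h' => hc_inj (hrow _ _ _ h h'))
      (fun a a' b h h' => hr_inj (hcol _ _ _ h h'))]
  refine card_bij (fun p _ => (r p.1, c p.2)) ?_ ?_ ?_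
  · intro p hp
    rw [mem_filter_univ] at hp ⊢
    have := p.1.isLt
    have := p.2.isLt
    exact ⟨hp, by simp [hr]; omega, by simp [hc]; omega⟩
  · intro p _ p' _ h
    simp only [Prod.mk.injEq] at h
    exact Prod.ext (hr_inj h.1) (hc_inj h.2)
  · rintro ⟨a, b⟩ hab
    obtain ⟨hQ, ha, hb⟩ : Q a b ≠ 0 ∧ n - i ≤ a ∧ (b : ℕ) < j := (mem_filter_univ (a, b)).mp hab
    have ha' : r ⟨a - (n - min i n), by omega⟩ = a := Fin.ext (by simp [hr]; omega)
    refine ⟨(⟨a - (n - min i n), by omega⟩, ⟨b, by omega⟩), ?_, Prod.ext ha' rfl⟩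
    rw [mem_filter_univ, Matrix.submatrix_apply, ha']
    exact hQ

theorem card_filter_ne_zero_and_val_eq [DecidableEq F] (Q : Matrix (Fin n) (Fin n) F) {x y : ℕ}
    (hx : x < n) (hy : y < n) :
    #{p : Fin n × Fin n | Q p.1 p.2 ≠ 0 ∧ (p.1 : ℕ) = x ∧ (p.2 : ℕ) = y} =
      if Q ⟨x, hx⟩ ⟨y, hy⟩ = 0 then 0 else 1 := by
  have hpt : ∀ p : Fin n × Fin n, (Q p.1 p.2 ≠ 0 ∧ (p.1 : ℕ) = x ∧ (p.2 : ℕ) = y) ↔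
      Q ⟨x, hx⟩ ⟨y, hy⟩ ≠ 0 ∧ p = (⟨x, hx⟩, ⟨y, hy⟩) := by
    rintro ⟨⟨a, ha⟩, ⟨b, hb⟩⟩
    simp only [Prod.mk.injEq, Fin.mk.injEq]
    constructor <;> rintro ⟨h, rfl, rfl⟩ <;> exact ⟨h, rfl, rfl⟩
  simp_rw [hpt]
  split_ifs with h <;> simp [h, filter_eq']

end llrank

/-- the entries of a subpermutation matrix Q with the same lower-left
ranks as A are given by the second differences of the rank function of A. -/
theorem subpermutation_entry_eq_rank_difference {F : Type*} [Field F] {n : ℕ}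
    (Q A : Matrix (Fin n) (Fin n) F)
    (hQ01 : ∀ i j : Fin n, Q i j = 0 ∨ Q i j = 1)
    (hQrow : ∀ i j k : Fin n, Q i j ≠ 0 → Q i k ≠ 0 → j = k)
    (hQcol : ∀ i j k : Fin n, Q i j ≠ 0 → Q k j ≠ 0 → i = k)
    (hrank : ∀ i j : ℕ, 1 ≤ i → i ≤ n → 1 ≤ j → j ≤ n → llrank A i j = llrank Q i j) :
    ∀ i j : ℕ, ∀ hi1 : 1 ≤ i, ∀ hin : i ≤ n, ∀ hj1 : 1 ≤ j, ∀ hjn : j ≤ n,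
      Q ⟨n - i, by omega⟩ ⟨j - 1, by omega⟩ =
        (((llrank A i j : ℤ) - (llrank A (i-1) j : ℤ) - (llrank A i (j-1) : ℤ)
          + (llrank A (i-1) (j-1) : ℤ) : ℤ) : F) := by
  intro i j hi1 hin hj1 hjn
  classical
  have hAQ : ∀ k l, k ≤ n → l ≤ n → llrank A k l = llrank Q k l := by
    intro k l hk hl
    rcases Nat.eq_zero_or_pos k with rfl | hk0
    · rw [llrank_zero_left, llrank_zero_left]
    rcases Nat.eq_zero_or_pos l with rfl | hl0
    · rw [llrank_zero_right, llrank_zero_right]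
    exact hrank k l hk0 hk hl0 hl
  obtain ⟨i, rfl⟩ : ∃ i', i = i' + 1 := ⟨i - 1, by omega⟩
  obtain ⟨j, rfl⟩ : ∃ j', j = j' + 1 := ⟨j - 1, by omega⟩
  simp only [Nat.add_sub_cancel]
  rw [hAQ _ _ hin hjn, hAQ _ _ (by omega) hjn, hAQ _ _ hin (by omega), hAQ _ _ (by omega) (by omega)]
  simp only [llrank_eq_card_support Q hQrow hQcol, show n - i = n - (i + 1) + 1 by omega]
  rw [card_quadrant_second_diff, card_filter_ne_zero_and_val_eq Q (by omega) (by omega)]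
  rcases hQ01 ⟨n - (i + 1), by omega⟩ ⟨j, by omega⟩ with h | h <;> simp [h]
end

section
/- Let Q = Σ_{i∈I} E_{i,σ(i)} be an n×n subpermutation matrix over a field F (I ⊆ [n], σ : I → [n] injective). Then a matrix A = [a_{ij}] belongs to the coset Q·U_n (U_n = unit upper triangular matrices) if and only if: (1) the set of indices of nonzero rows of A equals I, and (2) for each i ∈ I, the first nonzero entry of row i of A occurs in column σ(i) and equals 1. -/
/-!
Left multiplication by `Q` moves row `σ i` of `U` to row `i` for `i ∈ I` and kills the other
rows. If `U` is unit upper triangular, the first nonzero entry of its row `σ i` is the diagonal `1`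
in column `σ i`, which gives the pivot description of `Q * U`. Conversely, from `A` one rebuilds
`U` by putting row `i` of `A` in row `σ i` for `i ∈ I` (well defined as `σ` is injective on `I`)
and filling the remaining rows with those of the identity matrix.
-/

namespace Matrix

section PivotLift

variable {R ι : Type*} [Zero R] [One R] [DecidableEq ι] {I : Finset ι} {σ : ι → ι}

noncomputable def pivotLift (I : Finset ι) (σ : ι → ι) (A : Matrix ι ι R) : Matrix ι ι R :=
  Function.extend (fun a : I => σ a) (fun a => A a) (1 : Matrix ι ι R)

theorem pivotLift_apply_of_mem (hσ : Set.InjOn σ I) (A : Matrix ι ι R) {a : ι} (ha : a ∈ I) :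
    pivotLift I σ A (σ a) = A a :=
  Function.Injective.extend_apply (fun a b h => Subtype.ext (hσ a.2 b.2 h)) _ _ ⟨a, ha⟩

theorem pivotLift_apply_of_notMem (A : Matrix ι ι R) {r : ι} (hr : ¬∃ a ∈ I, σ a = r) :
    pivotLift I σ A r = (1 : Matrix ι ι R) r :=
  Function.extend_apply' _ _ _ fun ⟨a, h⟩ => hr ⟨a, a.2, h⟩

variable [Preorder ι] {A : Matrix ι ι R} (hσ : Set.InjOn σ I)
  (hpivot : ∀ i ∈ I, A i (σ i) = 1 ∧ ∀ j, j < σ i → A i j = 0)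
include hσ hpivot

theorem pivotLift_apply_of_lt {r j : ι} (hjr : j < r) : pivotLift I σ A r j = 0 := by
  by_cases hr : ∃ a ∈ I, σ a = r
  · obtain ⟨a, ha, rfl⟩ := hr
    rw [pivotLift_apply_of_mem hσ A ha]
    exact (hpivot a ha).2 j hjr
  · rw [pivotLift_apply_of_notMem A hr]
    exact one_apply_ne hjr.ne'

theorem pivotLift_apply_self (r : ι) : pivotLift I σ A r r = 1 := by
  by_cases hr : ∃ a ∈ I, σ a = r
  · obtain ⟨a, ha, rfl⟩ := hr
    rw [pivotLift_apply_of_mem hσ A ha]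
    exact (hpivot a ha).1
  · rw [pivotLift_apply_of_notMem A hr, one_apply_eq]

end PivotLift

variable {R ι : Type*} [NonAssocSemiring R] [Fintype ι] [DecidableEq ι]
  {I : Finset ι} {σ : ι → ι} {Q : Matrix ι ι R}

theorem subpermutation_mul_apply (hQ : ∀ i j, Q i j = if i ∈ I ∧ j = σ i then 1 else 0)
    (U : Matrix ι ι R) (i j : ι) : (Q * U) i j = if i ∈ I then U (σ i) j else 0 := by
  simp [mul_apply, hQ, ite_and]

theorem subpermutation_mul_pivotLift (hQ : ∀ i j, Q i j = if i ∈ I ∧ j = σ i then 1 else 0)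
    (hσ : Set.InjOn σ I) {A : Matrix ι ι R} (hA : ∀ i ∉ I, ∀ j, A i j = 0) :
    Q * pivotLift I σ A = A := by
  ext i j
  rw [subpermutation_mul_apply hQ]
  split_ifs with hi
  · rw [pivotLift_apply_of_mem hσ A hi]
  · exact (hA i hi j).symm

theorem subpermutation_mul_rows [Preorder ι] [Nontrivial R]
    (hQ : ∀ i j, Q i j = if i ∈ I ∧ j = σ i then 1 else 0) {U : Matrix ι ι R}
    (hlower : ∀ i j, j < i → U i j = 0) (hdiag : ∀ i, U i i = 1) :
    (∀ i, (∃ j, (Q * U) i j ≠ 0) ↔ i ∈ I) ∧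
      ∀ i ∈ I, (Q * U) i (σ i) = 1 ∧ ∀ j, j < σ i → (Q * U) i j = 0 := by
  simp_rw [subpermutation_mul_apply hQ]
  refine ⟨fun i => ⟨fun ⟨j, hj⟩ => ?_, fun hi => ⟨σ i, ?_⟩⟩, fun i hi => ?_⟩
  · by_contra hi; simp [hi] at hj
  · simp [hi, hdiag]
  · simp +contextual [hi, hdiag, hlower]

end Matrix

/-- description of the coset Q·U_n for a subpermutation
Q = Σ_{i∈I} E_{i,σ(i)}. -/
theorem mem_subpermutation_coset_iff {F : Type*} [Field F] {n : ℕ}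
    (I : Finset (Fin n)) (σ : Fin n → Fin n) (hσ : Set.InjOn σ ↑I)
    (Q : Matrix (Fin n) (Fin n) F)
    (hQ : ∀ i j : Fin n, Q i j = if i ∈ I ∧ j = σ i then 1 else 0)
    (A : Matrix (Fin n) (Fin n) F) :
    (∃ U : Matrix (Fin n) (Fin n) F,
        (∀ i j : Fin n, j < i → U i j = 0) ∧ (∀ i : Fin n, U i i = 1) ∧ A = Q * U) ↔
    ((∀ i : Fin n, (∃ j, A i j ≠ 0) ↔ i ∈ I) ∧
      ∀ i ∈ I, A i (σ i) = 1 ∧ ∀ j : Fin n, j < σ i → A i j = 0) := by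
  constructor
  · rintro ⟨U, hlower, hdiag, rfl⟩
    exact Matrix.subpermutation_mul_rows hQ hlower hdiag
  · rintro ⟨hrows, hpivot⟩
    have hzero : ∀ i ∉ I, ∀ j, A i j = 0 := fun i hi j => by
      by_contra h
      exact hi ((hrows i).1 ⟨j, h⟩)
    exact ⟨Matrix.pivotLift I σ A, fun _ _ => Matrix.pivotLift_apply_of_lt hσ hpivot,
      Matrix.pivotLift_apply_self hσ hpivot, (Matrix.subpermutation_mul_pivotLift hQ hσ hzero).symm⟩
end

section
/- The matrices A = E_{12} + E_{13} + E_{25} + E_{34} and B = E_{12} + E_{25} + E_{34} in M_5(F) are similar (conjugate by some invertible matrix) and lie in the same (B_5, B_5) double coset, but are not B_5-similar (not conjugate by any invertible upper triangular matrix). -/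
/-!
Index matrix units by `Fin 5`, so that `A = B + E₀₂`. The only nonzero product of a summand of `A`
with `E₁₂` is `E₀₁ E₁₂ = E₀₂`, hence `A (1 - E₁₂) = B` with both factors upper triangular; and the
unipotent `g = 1 + E₁₂ + E₄₃` satisfies `g A = A + E₁₃ = B g`.
Conversely, if an upper triangular `g` satisfies `g A = B g`, the entries `(0, 2)` and `(1, 3)` of
this equation give `g₀₀ = g₁₂ = g₄₃ = 0`, impossible since the diagonal entries of an invertible
upper triangular matrix are units.
-/

open Matrix

namespace Matrix

variable {n R : Type*} [Fintype n] [DecidableEq n] [CommRing R]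

theorem mul_mul_inv_eq_iff_mul_eq_mul {g A B : Matrix n n R} (hg : IsUnit g) :
    g * A * g⁻¹ = B ↔ g * A = B * g :=
  have := hg.invertible
  mul_inv_eq_iff_eq_mul_of_invertible g _ _

theorem IsUpperTriangular.isUnit_diag [LinearOrder n] {M : Matrix n n R}
    (hM : M.IsUpperTriangular) (hu : IsUnit M) (i : n) : IsUnit (M i i) := by
  rw [isUnit_iff_isUnit_det, det_of_isUpperTriangular hM, IsUnit.prod_univ_iff] at hu
  exact hu i

theorem isNilpotent_single_of_ne {i j : n} (h : i ≠ j) (c : R) : IsNilpotent (single i j c) :=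
  ⟨2, by simp [sq, h.symm]⟩

end Matrix

section

variable {R : Type*} [CommRing R]

local notation "A₅" => single 0 1 1 + single 0 2 1 + single 1 4 1 + single 2 3 1

local notation "B₅" => single 0 1 1 + single 1 4 1 + single 2 3 1

theorem isUnit_one_add_single_one_two_add_single_four_three :
    IsUnit (1 + single 1 2 1 + single 4 3 1 : Matrix (Fin 5) (Fin 5) R) := by
  rw [add_assoc]
  exact IsNilpotent.isUnit_one_add ⟨2, by simp [sq, add_mul, mul_add, single_mul_single_of_ne]⟩

theorem one_add_single_add_single_mul_eq_mul :
    (1 + single 1 2 1 + single 4 3 1 : Matrix (Fin 5) (Fin 5) R) * A₅ =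
      B₅ * (1 + single 1 2 1 + single 4 3 1) := by
  simp only [add_mul, mul_add, one_mul, mul_one, single_mul_single_same,
    single_mul_single_of_ne, ne_eq, Fin.reduceEq, not_false_eq_true, add_zero, zero_add]
  abel

theorem mul_one_sub_single_eq : (A₅ : Matrix (Fin 5) (Fin 5) R) * (1 - single 1 2 1) = B₅ := by
  simp only [mul_sub, add_mul, mul_one, single_mul_single_same, single_mul_single_of_ne,
    ne_eq, Fin.reduceEq, not_false_eq_true, add_zero]
  abel

theorem apply_zero_zero_eq_zero_of_isUpperTriangular_of_mul_eq_mul {g : Matrix (Fin 5) (Fin 5) R}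
    (hg : g.IsUpperTriangular) (hgAB : g * A₅ = B₅ * g) : g 0 0 = 0 := by
  have h02 : g 0 0 = g 1 2 := by
    simpa [mul_apply, Fin.sum_univ_five] using congr_fun₂ hgAB 0 2
  have h13 : g 1 2 = g 4 3 := by
    simpa [mul_apply, Fin.sum_univ_five] using congr_fun₂ hgAB 1 3
  rw [h02, h13, hg (by decide : (3 : Fin 5) < 4)]

end

/-- A = E₁₂+E₁₃+E₂₅+E₃₄ and B = E₁₂+E₂₅+E₃₄ in M₅(F) are similar and
lie in the same (B₅,B₅) double coset, but are not B₅-similar. -/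
theorem similar_same_coset_not_triangular_similar {F : Type*} [Field F]
    (A B : Matrix (Fin 5) (Fin 5) F)
    (hA : A = Matrix.single 0 1 1 + Matrix.single 0 2 1 +
          Matrix.single 1 4 1 + Matrix.single 2 3 1)
    (hB : B = Matrix.single 0 1 1 + Matrix.single 1 4 1 +
          Matrix.single 2 3 1) :
    (∃ g : Matrix (Fin 5) (Fin 5) F, IsUnit g ∧ g * A * g⁻¹ = B) ∧
    (∃ P P' : Matrix (Fin 5) (Fin 5) F,
        (∀ i j : Fin 5, j < i → P i j = 0) ∧ IsUnit P ∧
        (∀ i j : Fin 5, j < i → P' i j = 0) ∧ IsUnit P' ∧ P * A * P' = B) ∧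
    ¬ ∃ g : Matrix (Fin 5) (Fin 5) F,
        (∀ i j : Fin 5, j < i → g i j = 0) ∧ IsUnit g ∧ g * A * g⁻¹ = B := by
  subst hA hB
  have hg := isUnit_one_add_single_one_two_add_single_four_three (R := F)
  have hP' : (1 - single 1 2 1 : Matrix (Fin 5) (Fin 5) F).IsUpperTriangular :=
    blockTriangular_one.sub (blockTriangular_single (by decide) 1)
  refine ⟨⟨_, hg, (mul_mul_inv_eq_iff_mul_eq_mul hg).2 one_add_single_add_single_mul_eq_mul⟩,
    ⟨1, _, fun _ _ h => one_apply_ne h.ne', isUnit_one, fun _ _ h => hP' h,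
      (isNilpotent_single_of_ne (by decide) 1).isUnit_one_sub,
      by rw [one_mul, mul_one_sub_single_eq]⟩, ?_⟩
  rintro ⟨g, htri, hu, hconj⟩
  replace htri : g.IsUpperTriangular := fun i j hij => htri i j hij
  exact (htri.isUnit_diag hu 0).ne_zero <|
    apply_zero_zero_eq_zero_of_isUpperTriangular_of_mul_eq_mul htri
      ((mul_mul_inv_eq_iff_mul_eq_mul hu).1 hconj)
end

section
/- If A is a nilpotent upper triangular n×n matrix over a field F, then there exist a subpermutation matrix Q (necessarily strictly upper triangular) and a unit upper triangular matrix U such that A is B_n-similar to QU. -/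
/-!
Reduce `A` row by row from the bottom up, conjugating only by elementary upper triangular
matrices. When the rows below row `i` already have leading entries `1` in pairwise distinct
columns, adding a multiple of a lower row `k` to row `i` (and the compensating column operation,
which only touches column `k` above row `i`, since column `i` of a strictly upper triangular
matrix vanishes from row `i` down) pushes the leading entry of row `i` to the right, until row
`i` vanishes or leads in a fresh column; a diagonal conjugation then scales that entry to `1`.
The resulting matrix `M` factors as `Q * U`: `Q` records where the leading `1`s sit, and row `j`
of `U` is the row of `M` leading in column `j`, or the `j`-th unit row if there is none.
-/

open Matrix Finset

namespace Matrix

variable {ι R F : Type*} [LinearOrder ι]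

def StrictlyUpper [Zero R] (M : Matrix ι ι R) : Prop :=
  ∀ i j, j ≤ i → M i j = 0

section Semiring

variable [Fintype ι] [NonUnitalNonAssocSemiring R] {M P : Matrix ι ι R}

theorem BlockTriangular.mul_strictlyUpper (hP : P.BlockTriangular id) (hM : M.StrictlyUpper) :
    (P * M).StrictlyUpper := by
  intro i j hji
  rw [mul_apply]
  refine sum_eq_zero fun l _ => ?_
  rcases lt_or_ge l i with hli | hil
  · rw [hP hli, zero_mul]
  · rw [hM l j (hji.trans hil), mul_zero]

theorem StrictlyUpper.mul_blockTriangular (hM : M.StrictlyUpper) (hP : P.BlockTriangular id) :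
    (M * P).StrictlyUpper := by
  intro i j hji
  rw [mul_apply]
  refine sum_eq_zero fun l _ => ?_
  rcases le_or_gt l i with hli | hil
  · rw [hM i l hli, zero_mul]
  · rw [hP (hji.trans_lt hil), mul_zero]

end Semiring

section CommRing

variable [Fintype ι] [DecidableEq ι] [CommRing R] {M N K : Matrix ι ι R}

/-- `M` is `B_n`-similar to `N`. -/
def UpperTriangularSimilar (M N : Matrix ι ι R) : Prop :=
  ∃ P : Matrix ι ι R, P.BlockTriangular id ∧ IsUnit P ∧ N = P * M * P⁻¹

namespace UpperTriangularSimilar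

theorem refl (M : Matrix ι ι R) : UpperTriangularSimilar M M :=
  ⟨1, blockTriangular_one, isUnit_one, by simp⟩

theorem trans (hMN : UpperTriangularSimilar M N) (hNK : UpperTriangularSimilar N K) :
    UpperTriangularSimilar M K := by
  obtain ⟨P, hP, hPu, rfl⟩ := hMN
  obtain ⟨P', hP', hP'u, rfl⟩ := hNK
  exact ⟨P' * P, hP'.mul hP, hP'u.mul hPu, by simp only [mul_inv_rev, mul_assoc]⟩

theorem of_mul_eq_one {P P' : Matrix ι ι R} (hP : P.BlockTriangular id) (h : P' * P = 1) :
    UpperTriangularSimilar M (P * M * P') :=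
  ⟨P, hP, (isUnit_iff_isUnit_det P).mpr (isUnit_det_of_left_inverse h), by
    rw [inv_eq_left_inv h]⟩

theorem strictlyUpper (hMN : UpperTriangularSimilar M N) (hM : M.StrictlyUpper) :
    N.StrictlyUpper := by
  obtain ⟨P, hP, hPu, rfl⟩ := hMN
  have : Invertible P := hPu.invertible
  exact (hP.mul_strictlyUpper hM).mul_blockTriangular
    (blockTriangular_inv_of_blockTriangular hP)

end UpperTriangularSimilar

theorem StrictlyUpper.exists_similar_add_smul_row (hM : M.StrictlyUpper) {i k : ι}
    (hik : i < k) (c : R) : ∃ N, UpperTriangularSimilar M N ∧ (∀ p, i < p → N p = M p) ∧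
      N i = M i + c • M k := by
  refine ⟨transvection i k c * M * transvection i k (-c),
    .of_mul_eq_one (blockTriangular_transvection hik.le c) ?_, ?_⟩
  · rw [transvection_mul_transvection_same (h := hik.ne), neg_add_cancel, transvection_zero]
  have hcol : ∀ p, i ≤ p → (transvection i k c * M) p i = 0 := by
    intro p hip
    rcases eq_or_ne p i with rfl | hpi
    · rw [transvection_mul_apply_same, hM p p le_rfl, hM k p hik.le, mul_zero, add_zero]
    · rw [transvection_mul_apply_of_ne (ha := hpi), hM p i hip]
  have hrow : ∀ p, i ≤ p → (transvection i k c * M * transvection i k (-c)) p =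
      (transvection i k c * M) p := by
    intro p hip
    ext q
    rcases eq_or_ne q k with rfl | hqk
    · rw [mul_transvection_apply_same, hcol p hip, mul_zero, add_zero]
    · rw [mul_transvection_apply_of_ne (hb := hqk)]
  refine ⟨fun p hip => ?_, ?_⟩
  · ext q
    rw [hrow p hip.le, transvection_mul_apply_of_ne (ha := hip.ne')]
  · ext q
    rw [hrow i le_rfl, transvection_mul_apply_same]
    rfl

end CommRing

section Field

variable [Fintype ι] [DecidableEq ι] [Field F] {M N : Matrix ι ι F}

theorem StrictlyUpper.exists_similar_smul_row (hM : M.StrictlyUpper) (i : ι) {d : F}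
    (hd : d ≠ 0) : ∃ N, UpperTriangularSimilar M N ∧ (∀ p, i < p → N p = M p) ∧
      N i = d • M i := by
  refine ⟨diagonal (Pi.mulSingle i d) * M * diagonal (Pi.mulSingle i d⁻¹),
    .of_mul_eq_one (blockTriangular_diagonal _) ?_, fun p hip => ?_, ?_⟩
  · rw [diagonal_mul_diagonal, ← diagonal_one]
    congr 1
    ext p
    rcases eq_or_ne p i with rfl | hpi
    · simp [hd]
    · simp [hpi]
  · ext q
    rcases eq_or_ne q i with rfl | hqi
    · simp [hip.ne', hM p q hip.le]
    · simp [hip.ne', hqi]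
  · ext q
    rcases eq_or_ne q i with rfl | hqi
    · simp [hM q q le_rfl]
    · simp [hqi]

end Field

section Pivots

variable [Field F]

def IsLeadingIndex (v : ι → F) (j : ι) : Prop :=
  v j ≠ 0 ∧ ∀ m < j, v m = 0

def IsPivot (v : ι → F) (j : ι) : Prop :=
  IsLeadingIndex v j ∧ v j = 1

theorem IsLeadingIndex.unique {v : ι → F} {j j' : ι} (h : IsLeadingIndex v j)
    (h' : IsLeadingIndex v j') : j = j' := by
  by_contra hne
  rcases lt_or_gt_of_ne hne with hlt | hlt
  · exact h.1 (h'.2 j hlt)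
  · exact h'.1 (h.2 j' hlt)

theorem exists_isLeadingIndex [Finite ι] {v : ι → F} (hv : v ≠ 0) :
    ∃ j, IsLeadingIndex v j := by
  obtain ⟨j, hj, hmin⟩ := wellFounded_lt.has_min {j | v j ≠ 0} (Function.ne_iff.mp hv)
  exact ⟨j, hj, fun m hm => by_contra fun hvm => hmin m hvm hm⟩

theorem IsLeadingIndex.isPivot_inv_smul {v : ι → F} {j : ι} (h : IsLeadingIndex v j) :
    IsPivot ((v j)⁻¹ • v) j :=
  ⟨⟨by simp [h.1], fun m hm => by simp [h.2 m hm]⟩, by simp [h.1]⟩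

def PivotFormOn (S : Finset ι) (M : Matrix ι ι F) : Prop :=
  (∀ k ∈ S, M k = 0 ∨ ∃ j, IsPivot (M k) j) ∧
    ∀ k ∈ S, ∀ k' ∈ S, ∀ j, IsPivot (M k) j → IsPivot (M k') j → k = k'

theorem PivotFormOn.congr_rows {S : Finset ι} {M N : Matrix ι ι F} (hM : PivotFormOn S M)
    (h : ∀ k ∈ S, N k = M k) : PivotFormOn S N := by
  refine ⟨fun k hk => h k hk ▸ hM.1 k hk, fun k hk k' hk' j hkj hk'j => ?_⟩
  rw [h k hk] at hkj
  rw [h k' hk'] at hk'j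
  exact hM.2 k hk k' hk' j hkj hk'j

theorem PivotFormOn.insert [DecidableEq ι] {S : Finset ι} {M : Matrix ι ι F} {i : ι}
    (hM : PivotFormOn S M)
    (hi : M i = 0 ∨ ∃ j, IsPivot (M i) j ∧ ∀ k ∈ S, ¬IsPivot (M k) j) :
    PivotFormOn (insert i S) M := by
  have pivot_row_eq : ∀ k ∈ S, ∀ j, IsPivot (M i) j → IsPivot (M k) j → i = k := by
    intro k hk j hij hkj
    rcases hi with hi | ⟨j', hij', hfree⟩
    · exact absurd (congrFun hi j ▸ hij.2) zero_ne_one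
    · exact absurd (hij'.1.unique hij.1 ▸ hkj) (hfree k hk)
  refine ⟨fun k hk => ?_, fun k hk k' hk' j hkj hk'j => ?_⟩
  · rcases mem_insert.mp hk with rfl | hk
    · exact hi.imp_right fun ⟨j, hj, _⟩ => ⟨j, hj⟩
    · exact hM.1 k hk
  rcases mem_insert.mp hk with hki | hkS <;> rcases mem_insert.mp hk' with hk'i | hk'S
  · rw [hki, hk'i]
  · exact hki ▸ pivot_row_eq k' hk'S j (hki ▸ hkj) hk'j
  · exact hk'i ▸ (pivot_row_eq k hkS j (hk'i ▸ hk'j) hkj).symm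
  · exact hM.2 k hkS k' hk'S j hkj hk'j

open Classical in
noncomputable def pivotPattern (M : Matrix ι ι F) : Matrix ι ι F :=
  of fun p j => if IsPivot (M p) j then 1 else 0

theorem pivotPattern_ne_zero_iff {M : Matrix ι ι F} {p j : ι} :
    pivotPattern M p j ≠ 0 ↔ IsPivot (M p) j := by
  simp [pivotPattern]

theorem pivotPattern_eq_zero_or_eq_one (M : Matrix ι ι F) (p j : ι) :
    pivotPattern M p j = 0 ∨ pivotPattern M p j = 1 := by
  simp only [pivotPattern, of_apply]
  split_ifs <;> simp

theorem StrictlyUpper.pivotPattern {M : Matrix ι ι F} (hM : M.StrictlyUpper) :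
    (pivotPattern M).StrictlyUpper := by
  intro p j hjp
  by_contra h
  exact zero_ne_one ((hM p j hjp).symm.trans (pivotPattern_ne_zero_iff.mp h).2)

end Pivots

section Reduction

variable [Fintype ι] [DecidableEq ι] [Field F] {S : Finset ι} {i : ι}

theorem exists_similar_leadingIndex_off_pivots (hS : ∀ k ∈ S, i < k) (j : ι)
    (M : Matrix ι ι F) (hM : M.StrictlyUpper) (hMS : PivotFormOn S M)
    (hj : IsLeadingIndex (M i) j) :
    ∃ N, UpperTriangularSimilar M N ∧ PivotFormOn S N ∧
      (N i = 0 ∨ ∃ j', IsLeadingIndex (N i) j' ∧ ∀ k ∈ S, ¬IsPivot (N k) j') := by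
  induction j using WellFoundedGT.induction generalizing M with
  | _ j ih =>
    by_cases hfree : ∀ k ∈ S, ¬IsPivot (M k) j
    · exact ⟨M, .refl M, hMS, .inr ⟨j, hj, hfree⟩⟩
    push Not at hfree
    obtain ⟨k, hk, hkj⟩ := hfree
    obtain ⟨N, hMN, hrows, hNi⟩ := hM.exists_similar_add_smul_row (hS k hk) (-M i j)
    have hNS : PivotFormOn S N := hMS.congr_rows fun p hp => hrows p (hS p hp)
    have hN_le : ∀ m ≤ j, N i m = 0 := by
      intro m hm
      rw [hNi]
      rcases hm.lt_or_eq with hm | rfl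
      · simp [hj.2 m hm, hkj.1.2 m hm]
      · simp [hkj.2]
    by_cases hN0 : N i = 0
    · exact ⟨N, hMN, hNS, .inl hN0⟩
    obtain ⟨j', hj'⟩ := exists_isLeadingIndex hN0
    have hjj' : j < j' := lt_of_not_ge fun h => hj'.1 (hN_le j' h)
    obtain ⟨K, hNK, hKS, hKi⟩ := ih j' hjj' N (hMN.strictlyUpper hM) hNS hj'
    exact ⟨K, hMN.trans hNK, hKS, hKi⟩

theorem exists_similar_pivotFormOn_insert (hS : ∀ k ∈ S, i < k) {M : Matrix ι ι F}
    (hM : M.StrictlyUpper) (hMS : PivotFormOn S M) :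
    ∃ N, UpperTriangularSimilar M N ∧ PivotFormOn (insert i S) N := by
  obtain ⟨N, hMN, hNS, hNi⟩ : ∃ N, UpperTriangularSimilar M N ∧ PivotFormOn S N ∧
      (N i = 0 ∨ ∃ j, IsLeadingIndex (N i) j ∧ ∀ k ∈ S, ¬IsPivot (N k) j) := by
    by_cases hMi : M i = 0
    · exact ⟨M, .refl M, hMS, .inl hMi⟩
    obtain ⟨j, hj⟩ := exists_isLeadingIndex hMi
    exact exists_similar_leadingIndex_off_pivots hS j M hM hMS hj
  rcases hNi with hNi | ⟨j, hj, hfree⟩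
  · exact ⟨N, hMN, hNS.insert (.inl hNi)⟩
  obtain ⟨K, hNK, hrows, hKi⟩ :=
    (hMN.strictlyUpper hM).exists_similar_smul_row i (inv_ne_zero hj.1)
  have hfree' : ∀ k ∈ S, ¬IsPivot (K k) j := fun k hk => hrows k (hS k hk) ▸ hfree k hk
  refine ⟨K, hMN.trans hNK, (hNS.congr_rows fun p hp => hrows p (hS p hp)).insert
    (.inr ⟨j, hKi ▸ hj.isPivot_inv_smul, hfree'⟩)⟩

theorem StrictlyUpper.exists_similar_pivotFormOn {A : Matrix ι ι F} (hA : A.StrictlyUpper)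
    (S : Finset ι) : ∃ M, UpperTriangularSimilar A M ∧ PivotFormOn S M := by
  induction S using Finset.induction_on_min with
  | empty => exact ⟨A, .refl A, by simp [PivotFormOn]⟩
  | insert i S hS ih =>
    obtain ⟨M, hAM, hMS⟩ := ih
    obtain ⟨N, hMN, hN⟩ := exists_similar_pivotFormOn_insert hS (hAM.strictlyUpper hA) hMS
    exact ⟨N, hAM.trans hMN, hN⟩

end Reduction

section Factorization

variable [Fintype ι] [DecidableEq ι] [Field F] {M : Matrix ι ι F}

open Classical in
noncomputable def pivotRows (M : Matrix ι ι F) : Matrix ι ι F :=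
  of fun j m => if h : ∃ p, IsPivot (M p) j then M h.choose m else (1 : Matrix ι ι F) j m

theorem pivotRows_blockTriangular : (pivotRows M).BlockTriangular id := by
  intro j m hmj
  simp only [pivotRows, of_apply]
  split_ifs with h
  · exact h.choose_spec.1.2 m hmj
  · exact one_apply_ne hmj.ne'

theorem pivotRows_apply_self (j : ι) : pivotRows M j j = 1 := by
  simp only [pivotRows, of_apply]
  split_ifs with h
  · exact h.choose_spec.2
  · exact one_apply_eq j

theorem PivotFormOn.eq_pivotPattern_mul_pivotRows (hM : PivotFormOn univ M) :
    M = pivotPattern M * pivotRows M := by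
  ext p m
  rw [mul_apply]
  rcases hM.1 p (mem_univ p) with hp | ⟨j, hj⟩
  · refine (congrFun hp m).trans (sum_eq_zero fun j _ => ?_).symm
    simp [pivotPattern, IsPivot, IsLeadingIndex, hp]
  have hex : ∃ p', IsPivot (M p') j := ⟨p, hj⟩
  have hchoose : hex.choose = p :=
    hM.2 _ (mem_univ _) p (mem_univ p) j hex.choose_spec hj
  rw [sum_eq_single j]
  · simp [pivotPattern, pivotRows, hj, hex, hchoose]
  · intro j' _ hj'
    rw [pivotPattern, of_apply, if_neg fun h => hj' (h.1.unique hj.1), zero_mul]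
  · simp

end Factorization

end Matrix

/-- every strictly upper triangular matrix is B_n-similar to Q·U with
Q a strictly upper triangular subpermutation and U unit upper triangular. -/
theorem strictly_upper_triangular_similar_QU {F : Type*} [Field F] {n : ℕ}
    (A : Matrix (Fin n) (Fin n) F)
    (hA : ∀ i j : Fin n, j ≤ i → A i j = 0) :
    ∃ P Q U : Matrix (Fin n) (Fin n) F,
      (∀ i j : Fin n, j < i → P i j = 0) ∧ IsUnit P ∧
      (∀ i j : Fin n, j ≤ i → Q i j = 0) ∧
      (∀ i j : Fin n, Q i j = 0 ∨ Q i j = 1) ∧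
      (∀ i j k : Fin n, Q i j ≠ 0 → Q i k ≠ 0 → j = k) ∧
      (∀ i j k : Fin n, Q i j ≠ 0 → Q k j ≠ 0 → i = k) ∧
      (∀ i j : Fin n, j < i → U i j = 0) ∧ (∀ i : Fin n, U i i = 1) ∧
      P * A * P⁻¹ = Q * U := by
  have hA : A.StrictlyUpper := hA
  obtain ⟨M, hAM, hM⟩ := hA.exists_similar_pivotFormOn univ
  have hM_upper := hAM.strictlyUpper hA
  obtain ⟨P, hP, hPu, rfl⟩ := hAM
  refine ⟨P, pivotPattern _, pivotRows _, fun i j h => hP h, hPu, hM_upper.pivotPattern,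
    pivotPattern_eq_zero_or_eq_one _, fun i j k hj hk => ?_, fun i j k hi hk => ?_,
    fun i j h => pivotRows_blockTriangular h, pivotRows_apply_self,
    hM.eq_pivotPattern_mul_pivotRows⟩
  · exact (pivotPattern_ne_zero_iff.mp hj).1.unique (pivotPattern_ne_zero_iff.mp hk).1
  · exact hM.2 i (mem_univ i) k (mem_univ k) j (pivotPattern_ne_zero_iff.mp hi)
      (pivotPattern_ne_zero_iff.mp hk)
end

section
/- Let Q be a strictly upper triangular n×n subpermutation matrix and D an invertible diagonal matrix over F. Then there exists an invertible diagonal matrix D' such that D' Q D (D')^{-1} = Q. -/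
open Classical in
noncomputable def auxg {F : Type*} [Field F] {n : ℕ} (Q : Matrix (Fin n) (Fin n) F)
    (hstrict : ∀ i j : Fin n, j ≤ i → Q i j = 0) (d : Fin n → F) : ℕ → F
  | m =>
    if hm : m < n then
      if h : ∃ i : Fin n, Q i ⟨m, hm⟩ ≠ 0 then
        have hlt : (h.choose : Fin n).val < m := by
          by_contra hle
          exact h.choose_spec (hstrict _ _ (by
            simp only [Fin.le_def]
            omega))
        auxg Q hstrict d h.choose.val * d ⟨m, hm⟩
      else 1
    else 1

open Classical in
theorem auxg_ne_zero {F : Type*} [Field F] {n : ℕ} (Q : Matrix (Fin n) (Fin n) F)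
    (hstrict : ∀ i j : Fin n, j ≤ i → Q i j = 0) (d : Fin n → F) (hd : ∀ i, d i ≠ 0)
    (m : ℕ) : auxg Q hstrict d m ≠ 0 := by
  induction m using Nat.strong_induction_on with
  | _ m ih =>
    rw [auxg]
    split_ifs with hm h
    · have hlt : (h.choose : Fin n).val < m := by
        by_contra hle
        exact h.choose_spec (hstrict _ _ (by simp only [Fin.le_def]; omega))
      exact mul_ne_zero (ih _ hlt) (hd _)
    · exact one_ne_zero
    · exact one_ne_zero

/-- for a strictly upper triangular subpermutation Q and invertible
diagonal D, there is an invertible diagonal D' with D' Q D (D')⁻¹ = Q. -/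
theorem exists_diagonal_fixing_subpermutation {F : Type*} [Field F] {n : ℕ}
    (Q : Matrix (Fin n) (Fin n) F)
    (hstrict : ∀ i j : Fin n, j ≤ i → Q i j = 0)
    (h01 : ∀ i j : Fin n, Q i j = 0 ∨ Q i j = 1)
    (hrow : ∀ i j k : Fin n, Q i j ≠ 0 → Q i k ≠ 0 → j = k)
    (hcol : ∀ i j k : Fin n, Q i j ≠ 0 → Q k j ≠ 0 → i = k)
    (d : Fin n → F) (hd : ∀ i, d i ≠ 0) :
    ∃ d' : Fin n → F, (∀ i, d' i ≠ 0) ∧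
      Matrix.diagonal d' * Q * Matrix.diagonal d *
        Matrix.diagonal (fun i => (d' i)⁻¹) = Q := by
  classical
  refine ⟨fun i : Fin n => auxg Q hstrict d i.val,
    fun i => auxg_ne_zero Q hstrict d hd i.val, ?_⟩
  ext i j
  have entry : (Matrix.diagonal (fun i : Fin n => auxg Q hstrict d i.val) * Q * Matrix.diagonal d *
      Matrix.diagonal (fun i : Fin n => (auxg Q hstrict d i.val)⁻¹)) i j
      = auxg Q hstrict d i.val * Q i j * d j * (auxg Q hstrict d j.val)⁻¹ := by
    rw [Matrix.mul_diagonal, Matrix.mul_diagonal, Matrix.diagonal_mul]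
  rw [entry]
  by_cases hq : Q i j = 0
  · simp [hq]
  · -- Q i j ≠ 0, so i < j and the recursion at j picks witness i
    have hj : auxg Q hstrict d j.val = auxg Q hstrict d i.val * d j := by
      conv_lhs => rw [auxg]
      have hjn : (j : ℕ) < n := j.isLt
      rw [dif_pos hjn]
      have hex : ∃ k : Fin n, Q k ⟨j.val, hjn⟩ ≠ 0 := ⟨i, by simpa using hq⟩
      rw [dif_pos hex]
      have : hex.choose = i := hcol _ _ _ (by simpa using hex.choose_spec) (by simpa using hq)
      simp only [this, Fin.eta]
    have ha := auxg_ne_zero Q hstrict d hd i.val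
    have hdj := hd j
    rw [hj, mul_inv]
    field_simp
end

section
/- Let A, C ∈ M_n(F) with C = D A D^{-1} for an invertible diagonal matrix D. Then for every cyclic sequence of distinct indices i_1, ..., i_p (with i_{p+1} := i_1), the product f_{i_1 i_2}(A) ⋯ f_{i_p i_1}(A) equals f_{i_1 i_2}(C) ⋯ f_{i_p i_1}(C), where f_{ij}(M) := m_{ij} if m_{ij} ≠ 0, := 1/m_{ji} if m_{ij} = 0 and m_{ji} ≠ 0, and := 0 otherwise. -/
open Classical

/-- f_{ij}(M): m_{ij} if nonzero; else 1/m_{ji} if m_{ji} ≠ 0; else 0. -/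
noncomputable def cycf {F : Type*} [Field F] {n : ℕ}
    (M : Matrix (Fin n) (Fin n) F) (i j : Fin n) : F :=
  if M i j ≠ 0 then M i j else if M j i ≠ 0 then (M j i)⁻¹ else 0

lemma cycf_conj {F : Type*} [Field F] {n : ℕ}
    (A C : Matrix (Fin n) (Fin n) F) (d : Fin n → F) (hd : ∀ i, d i ≠ 0)
    (hE : ∀ i j, C i j = d i * A i j * (d j)⁻¹) (i j : Fin n) :
    cycf C i j = d i * (d j)⁻¹ * cycf A i j := by
  unfold cycf
  rw [hE i j, hE j i]
  by_cases h1 : A i j = 0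
  · by_cases h2 : A j i = 0
    · simp [h1, h2]
    · have hji : d j * A j i * (d i)⁻¹ ≠ 0 := by simp [hd i, hd j, h2]
      have hij : d i * A i j * (d j)⁻¹ = 0 := by simp [h1]
      rw [if_neg (not_not_intro hij), if_pos hji, if_neg (not_not_intro h1), if_pos h2]
      field_simp
  · have hij : d i * A i j * (d j)⁻¹ ≠ 0 := by simp [hd i, hd j, h1]
    rw [if_pos hij, if_pos h1]
    ring

lemma mod_aux1 {p a : ℕ} (hp : 0 < p) (ha : a < p) : ((a + 1) % p + p - 1) % p = a := by
  rcases Nat.lt_or_ge (a + 1) p with h | h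
  · rw [Nat.mod_eq_of_lt h]
    have h2 : a + 1 + p - 1 = p + a := by omega
    rw [h2, Nat.add_mod_left, Nat.mod_eq_of_lt ha]
  · have hap : a + 1 = p := by omega
    have h0 : (a + 1) % p = 0 := by rw [hap]; exact Nat.mod_self p
    rw [h0]
    have h2 : 0 + p - 1 = a := by omega
    rw [h2, Nat.mod_eq_of_lt ha]

lemma mod_aux2 {p a : ℕ} (hp : 0 < p) (ha : a < p) : ((a + p - 1) % p + 1) % p = a := by
  rcases Nat.eq_zero_or_pos a with h | h
  · subst h
    have h1 : (0 + p - 1) % p = 0 + p - 1 := Nat.mod_eq_of_lt (by omega)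
    rw [h1]
    have h2 : 0 + p - 1 + 1 = p := by omega
    rw [h2, Nat.mod_self]
  · have h1 : a + p - 1 = p + (a - 1) := by omega
    have h2 : (p + (a - 1)) % p = a - 1 := by
      rw [Nat.add_mod_left]; exact Nat.mod_eq_of_lt (by omega)
    rw [h1, h2]
    have h3 : a - 1 + 1 = a := by omega
    rw [h3, Nat.mod_eq_of_lt ha]

/-- cyclic products of f-values are invariant under conjugation by an
invertible diagonal matrix. -/
theorem diagonal_conj_cycle_product_invariant {F : Type*} [Field F] {n : ℕ}
    (A C : Matrix (Fin n) (Fin n) F) (d : Fin n → F) (hd : ∀ i, d i ≠ 0)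
    (hC : C = Matrix.diagonal d * A * (Matrix.diagonal d)⁻¹)
    (p : ℕ) (hp : 0 < p) (c : ℕ → Fin n)
    (hinj : ∀ k l, k < p → l < p → c k = c l → k = l) :
    ∏ k ∈ Finset.range p, cycf A (c k) (c ((k + 1) % p)) =
    ∏ k ∈ Finset.range p, cycf C (c k) (c ((k + 1) % p)) := by
  have hdiag : (Matrix.diagonal d)⁻¹ = Matrix.diagonal (fun i => (d i)⁻¹) := by
    apply Matrix.inv_eq_right_inv
    rw [Matrix.diagonal_mul_diagonal]
    have : (fun i => d i * (d i)⁻¹) = fun _ : Fin n => (1 : F) := by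
      funext i; exact mul_inv_cancel₀ (hd i)
    rw [this, Matrix.diagonal_one]
  have hE : ∀ i j, C i j = d i * A i j * (d j)⁻¹ := by
    intro i j
    rw [hC, hdiag, Matrix.mul_diagonal, Matrix.diagonal_mul]
  have key : ∀ k, cycf C (c k) (c ((k + 1) % p)) =
      d (c k) * (d (c ((k + 1) % p)))⁻¹ * cycf A (c k) (c ((k + 1) % p)) :=
    fun k => cycf_conj A C d hd hE _ _
  rw [Finset.prod_congr rfl (fun k _ => key k), Finset.prod_mul_distrib,
    Finset.prod_mul_distrib]
  have hshift : ∏ k ∈ Finset.range p, (d (c ((k + 1) % p)))⁻¹ =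
      ∏ k ∈ Finset.range p, (d (c k))⁻¹ := by
    apply Finset.prod_nbij' (fun k => (k + 1) % p) (fun k => (k + p - 1) % p)
    · intro a _; exact Finset.mem_range.mpr (Nat.mod_lt _ hp)
    · intro a _; exact Finset.mem_range.mpr (Nat.mod_lt _ hp)
    · intro a ha; exact mod_aux1 hp (Finset.mem_range.mp ha)
    · intro a ha; exact mod_aux2 hp (Finset.mem_range.mp ha)
    · intro a _; rfl
  rw [hshift]
  have hone : (∏ x ∈ Finset.range p, d (c x)) * ∏ k ∈ Finset.range p, (d (c k))⁻¹ = 1 := by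
    rw [← Finset.prod_mul_distrib]
    exact Finset.prod_eq_one (fun k _ => mul_inv_cancel₀ (hd (c k)))
  rw [hone, one_mul]
end

section
/- Suppose A, C ∈ M_n(F) satisfy: (1) a_{ij} ≠ 0 iff c_{ij} ≠ 0 for all i,j; and (2) for every cyclic sequence (i_1,...,i_p) of distinct indices such that for each k at least one of a_{i_k i_{k+1}}, a_{i_{k+1} i_k} is nonzero (with i_{p+1}=i_1), the cycle products f_{i_1 i_2}(A)⋯f_{i_p i_1}(A) and f_{i_1 i_2}(C)⋯f_{i_p i_1}(C) agree. Then there is an invertible diagonal matrix D with C = D A D^{-1}. -/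
open Classical

/-!
Put the weight `r i j = f_{ij}(C) / f_{ij}(A)` on each edge of the graph of `A`. Every closed
walk splits at a repeated vertex into two shorter closed walks, so the hypothesis on simple
cycles makes the weight of every closed walk equal to `1`. Going along a walk and back is a
closed walk, so two walks with the same endpoints have the same weight, and the weight `d i`
of a walk from `i` to a fixed vertex of its connected component satisfies `d i = r i j * d j`
along edges. For `a_{ij} ≠ 0` this says `c_{ij} = d_i a_{ij} d_j⁻¹`.
-/

open Finset

section Walk

variable {V M : Type*} [CommMonoid M] {R : V → V → Prop}

def IsWalk (R : V → V → Prop) (c : ℕ → V) (p : ℕ) : Prop :=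
  ∀ k < p, R (c k) (c (k + 1))

def walkProd (r : V → V → M) (c : ℕ → V) (p : ℕ) : M :=
  ∏ k ∈ range p, r (c k) (c (k + 1))

def walkEdge (i j : V) : ℕ → V := fun t => if t = 0 then i else j

def walkAppend (c : ℕ → V) (p : ℕ) (e : ℕ → V) : ℕ → V :=
  fun t => if t ≤ p then c t else e (t - p)

def walkReverse (c : ℕ → V) (p : ℕ) : ℕ → V := fun t => c (p - t)

variable {c e : ℕ → V} {p q : ℕ}

lemma walkAppend_of_le {t : ℕ} (h : t ≤ p) : walkAppend c p e t = c t := if_pos h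

lemma walkAppend_add (h : c p = e 0) (t : ℕ) : walkAppend c p e (p + t) = e t := by
  unfold walkAppend
  split_ifs with ht
  · obtain rfl : t = 0 := by omega
    simpa using h
  · simp

lemma isWalk_walkEdge {i j : V} (h : R i j) : IsWalk R (walkEdge i j) 1 := by
  simpa [IsWalk, walkEdge] using h

lemma IsWalk.append (hc : IsWalk R c p) (he : IsWalk R e q) (h : c p = e 0) :
    IsWalk R (walkAppend c p e) (p + q) := by
  intro k hk
  rcases lt_or_ge k p with hkp | hkp
  · rw [walkAppend_of_le hkp.le, walkAppend_of_le hkp]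
    exact hc k hkp
  · obtain ⟨t, rfl⟩ := Nat.exists_eq_add_of_le hkp
    rw [walkAppend_add h, add_assoc, walkAppend_add h]
    exact he t (by omega)

lemma IsWalk.reverse (hR : ∀ ⦃i j⦄, R i j → R j i) (hc : IsWalk R c p) :
    IsWalk R (walkReverse c p) p := by
  intro k hk
  have h := hc (p - (k + 1)) (by omega)
  rw [show p - (k + 1) + 1 = p - k by omega] at h
  exact hR h

lemma IsWalk.shift (hc : IsWalk R c (p + q)) : IsWalk R (fun t => c (p + t)) q :=
  fun k hk => hc (p + k) (by omega)

lemma IsWalk.mono (hc : IsWalk R c p) (h : q ≤ p) : IsWalk R c q :=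
  fun k hk => hc k (by omega)

lemma exists_isWalk_of_eqvGen {i j : V} (hR : ∀ ⦃i j⦄, R i j → R j i)
    (h : Relation.EqvGen R i j) : ∃ p c, c 0 = i ∧ c p = j ∧ IsWalk R c p := by
  induction h with
  | rel i j h => exact ⟨1, walkEdge i j, rfl, rfl, isWalk_walkEdge h⟩
  | refl i => exact ⟨0, fun _ => i, rfl, rfl, fun k hk => absurd hk k.not_lt_zero⟩
  | symm i j _ ih =>
    obtain ⟨p, c, hc0, hcp, hc⟩ := ih
    exact ⟨p, walkReverse c p, by simpa [walkReverse], by simpa [walkReverse], hc.reverse hR⟩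
  | trans i j k _ _ ih₁ ih₂ =>
    obtain ⟨p, c, hc0, hcp, hc⟩ := ih₁
    obtain ⟨q, e, he0, heq, he⟩ := ih₂
    have h : c p = e 0 := hcp.trans he0.symm
    exact ⟨p + q, walkAppend c p e, by rw [walkAppend_of_le p.zero_le, hc0],
      by rw [walkAppend_add h, heq], hc.append he h⟩

variable (r : V → V → M)

lemma walkProd_walkEdge (i j : V) : walkProd r (walkEdge i j) 1 = r i j := by
  simp [walkProd, walkEdge]

lemma walkProd_congr (h : ∀ t ≤ p, c t = e t) : walkProd r c p = walkProd r e p :=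
  prod_congr rfl fun k hk => by
    rw [mem_range] at hk
    rw [h k hk.le, h (k + 1) hk]

lemma walkProd_add :
    walkProd r c (p + q) = walkProd r c p * walkProd r (fun t => c (p + t)) q := by
  simp only [walkProd, prod_range_add, add_assoc]

lemma walkProd_append (h : c p = e 0) :
    walkProd r (walkAppend c p e) (p + q) = walkProd r c p * walkProd r e q := by
  rw [walkProd_add, walkProd_congr r fun t ht => walkAppend_of_le ht]
  simp only [walkAppend_add h]

variable {r}
  (hsimple : ∀ p c, 0 < p → (∀ k < p, ∀ l < p, c k = c l → k = l) → IsWalk R c p →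
    c p = c 0 → walkProd r c p = 1)
include hsimple

theorem walkProd_eq_one_of_closed (hc : IsWalk R c p) (hclosed : c p = c 0) :
    walkProd r c p = 1 := by
  induction p using Nat.strong_induction_on generalizing c with
  | _ p ih =>
  rcases p.eq_zero_or_pos with rfl | hp
  · simp [walkProd]
  by_cases hinj : ∀ k < p, ∀ l < p, c k = c l → k = l
  · exact hsimple p c hp hinj hc hclosed
  obtain ⟨k, l, hkl, hlp, hckl⟩ : ∃ k l, k < l ∧ l < p ∧ c k = c l := by
    push Not at hinj
    obtain ⟨k, hk, l, hl, he, hne⟩ := hinj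
    rcases hne.lt_or_gt with h | h
    exacts [⟨k, l, h, hl, he⟩, ⟨l, k, h, hk, he.symm⟩]
  obtain ⟨m, rfl⟩ := Nat.exists_eq_add_of_le hkl.le
  obtain ⟨q, rfl⟩ := Nat.exists_eq_add_of_le hlp.le
  have hglue : c k = c (k + m + 0) := hckl
  have hloop : walkProd r (fun t => c (k + t)) m = 1 :=
    ih m (by omega) (hc.mono (q := k + m) (by omega)).shift (by simpa using hckl.symm)
  have hrest : walkProd r (walkAppend c k fun t => c (k + m + t)) (k + q) = 1 :=
    ih (k + q) (by omega) ((hc.mono (by omega)).append hc.shift hglue)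
      (by rw [walkAppend_add hglue, walkAppend_of_le k.zero_le, hclosed])
  rw [walkProd_append r hglue] at hrest
  rw [walkProd_add, walkProd_add, mul_right_comm, hrest, hloop, one_mul]

variable (hR : ∀ ⦃i j⦄, R i j → R j i)
include hR

lemma walkProd_mul_walkProd_walkReverse (hc : IsWalk R c p) (he : IsWalk R e q)
    (h0 : c 0 = e 0) (hend : c p = e q) :
    walkProd r c p * walkProd r (walkReverse e q) q = 1 := by
  have hglue : c p = walkReverse e q 0 := by simpa [walkReverse]
  rw [← walkProd_append r hglue]
  refine walkProd_eq_one_of_closed hsimple (hc.append (he.reverse hR) hglue) ?_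
  rw [walkAppend_add hglue, walkAppend_of_le p.zero_le, h0]
  simp [walkReverse]

lemma walkProd_eq_of_endpoints (hc : IsWalk R c p) (he : IsWalk R e q)
    (h0 : c 0 = e 0) (hend : c p = e q) :
    walkProd r c p = walkProd r e q := by
  have hc' := walkProd_mul_walkProd_walkReverse hsimple hR hc he h0 hend
  have he' := walkProd_mul_walkProd_walkReverse hsimple hR he he rfl rfl
  calc walkProd r c p
      = walkProd r c p * (walkProd r e q * walkProd r (walkReverse e q) q) := by rw [he', mul_one]
    _ = walkProd r e q := by rw [mul_left_comm, hc', mul_one]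

theorem exists_potential :
    ∃ d : V → M, (∀ i, IsUnit (d i)) ∧ ∀ i j, R i j → d i = r i j * d j := by
  let s := Relation.EqvGen.setoid R
  have hwalk (i : V) : ∃ p c, c 0 = i ∧ c p = (⟦i⟧ : Quotient s).out ∧ IsWalk R c p :=
    exists_isWalk_of_eqvGen hR (Quotient.mk_out (s := s) i).symm
  choose p c hc0 hcp hc using hwalk
  refine ⟨fun i => walkProd r (c i) (p i), fun i => .of_mul_eq_one _
    (walkProd_mul_walkProd_walkReverse hsimple hR (hc i) (hc i) rfl rfl), fun i j hij => ?_⟩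
  have hglue : walkEdge i j 1 = c j 0 := (hc0 j).symm
  rw [← walkProd_walkEdge r, ← walkProd_append r hglue]
  refine walkProd_eq_of_endpoints hsimple hR (hc i) ((isWalk_walkEdge hij).append (hc j) hglue)
    (by rw [hc0, walkAppend_of_le zero_le_one]; rfl) ?_
  rw [walkAppend_add hglue, hcp, hcp, Quotient.sound (Relation.EqvGen.rel i j hij)]

end Walk

section Matrix

variable {F : Type*} [Field F] {n : ℕ}

lemma cycf_of_ne_zero {M : Matrix (Fin n) (Fin n) F} {i j : Fin n} (h : M i j ≠ 0) :
    cycf M i j = M i j := if_pos h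

lemma cycf_ne_zero {M : Matrix (Fin n) (Fin n) F} {i j : Fin n} (h : M i j ≠ 0 ∨ M j i ≠ 0) :
    cycf M i j ≠ 0 := by
  unfold cycf
  split_ifs <;> simp_all

lemma walkProd_cycf_div_eq_one {A C : Matrix (Fin n) (Fin n) F}
    (hcyc : ∀ (p : ℕ) (c : ℕ → Fin n), 0 < p →
      (∀ k l, k < p → l < p → c k = c l → k = l) →
      (∀ k < p, A (c k) (c ((k + 1) % p)) ≠ 0 ∨ A (c ((k + 1) % p)) (c k) ≠ 0) →
      ∏ k ∈ Finset.range p, cycf A (c k) (c ((k + 1) % p)) =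
        ∏ k ∈ Finset.range p, cycf C (c k) (c ((k + 1) % p)))
    {p : ℕ} {c : ℕ → Fin n} (hp : 0 < p) (hinj : ∀ k < p, ∀ l < p, c k = c l → k = l)
    (hc : IsWalk (fun i j => A i j ≠ 0 ∨ A j i ≠ 0) c p) (hclosed : c p = c 0) :
    walkProd (fun i j => cycf C i j / cycf A i j) c p = 1 := by
  have hmod : ∀ k < p, c ((k + 1) % p) = c (k + 1) := fun k hk => by
    rcases (show k + 1 ≤ p by omega).eq_or_lt with h | h
    · rw [h, Nat.mod_self, hclosed]
    · rw [Nat.mod_eq_of_lt h]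
  have hprod (M : Matrix (Fin n) (Fin n) F) : ∏ k ∈ range p, cycf M (c k) (c ((k + 1) % p)) =
      ∏ k ∈ range p, cycf M (c k) (c (k + 1)) :=
    prod_congr rfl fun k hk => by rw [hmod k (mem_range.1 hk)]
  have hA : ∏ k ∈ range p, cycf A (c k) (c (k + 1)) ≠ 0 :=
    prod_ne_zero_iff.2 fun k hk => cycf_ne_zero (hc k (mem_range.1 hk))
  have key := hcyc p c hp (fun k l hk hl => hinj k hk l hl)
    (fun k hk => by rw [hmod k hk]; exact hc k hk)
  rw [hprod, hprod] at key
  rw [walkProd, prod_div_distrib, ← key, div_self hA]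

end Matrix

/-- if A and C have the same nonzero pattern and all cyclic products
of f-values agree, then C = D A D⁻¹ for some invertible diagonal D. -/
theorem diagonal_similar_of_cycle_products {F : Type*} [Field F] {n : ℕ}
    (A C : Matrix (Fin n) (Fin n) F)
    (hsupp : ∀ i j : Fin n, A i j ≠ 0 ↔ C i j ≠ 0)
    (hcyc : ∀ (p : ℕ) (c : ℕ → Fin n), 0 < p →
      (∀ k l, k < p → l < p → c k = c l → k = l) →
      (∀ k < p, A (c k) (c ((k + 1) % p)) ≠ 0 ∨ A (c ((k + 1) % p)) (c k) ≠ 0) →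
      ∏ k ∈ Finset.range p, cycf A (c k) (c ((k + 1) % p)) =
        ∏ k ∈ Finset.range p, cycf C (c k) (c ((k + 1) % p))) :
    ∃ d : Fin n → F, (∀ i, d i ≠ 0) ∧
      C = Matrix.diagonal d * A * Matrix.diagonal (fun i => (d i)⁻¹) := by
  obtain ⟨d, hd, hedge⟩ := exists_potential (R := fun i j => A i j ≠ 0 ∨ A j i ≠ 0)
    (fun _ _ hp hinj hc hclosed => walkProd_cycf_div_eq_one hcyc hp hinj hc hclosed)
    fun _ _ => Or.symm
  refine ⟨d, fun i => (hd i).ne_zero, ?_⟩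
  ext i j
  rw [Matrix.mul_assoc, Matrix.diagonal_mul, Matrix.mul_diagonal]
  by_cases hA : A i j = 0
  · have hC : C i j = 0 := by simpa [hA] using hsupp i j
    simp [hA, hC]
  · have hC : C i j ≠ 0 := (hsupp i j).1 hA
    rw [hedge i j (Or.inl hA), cycf_of_ne_zero hA, cycf_of_ne_zero hC]
    field_simp [(hd j).ne_zero]
end

section
/- Let S be a set of pairs (i,j) with 1 ≤ i < j ≤ n such that U_S := {I_n + Σ_{(i,j)∈S} a_{ij} E_{ij} : a_{ij} ∈ F} is a subgroup of the unit upper triangular group U_n. Then every element of U_S is a product of at most |S| matrices of the form I_n + λ E_{ij} with (i,j) ∈ S and λ ∈ F. -/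
/-!
Pick `(i, j) ∈ S` with the largest column index `j`. Every pair of `S` lies strictly above the
diagonal, so no pair of `S` has row index `j`; hence `E i j` annihilates the rest of the sum from
the left and `1 + ∑ a E = (1 + a i j • E i j) * (1 + ∑_{S \ {(i, j)}} a E)`. Induct on `S`.
-/

open Matrix

theorem one_add_mul_one_add_of_mul_eq_zero {A : Type*} [Semiring A] {x y : A} (h : x * y = 0) :
    (1 + x) * (1 + y) = 1 + (x + y) := by
  rw [add_mul, one_mul, mul_add, mul_one, h, add_zero]
  abel

section
variable {ι R : Type*} [Fintype ι] [LinearOrder ι] [Semiring R]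

theorem single_mul_sum_smul_single_eq_zero {i j : ι} (c : R) (s : Finset (ι × ι))
    (a : ι × ι → R) (hs : ∀ q ∈ s, q.1 < q.2 ∧ q.2 ≤ j) :
    single i j c * ∑ q ∈ s, a q • single q.1 q.2 (1 : R) = 0 := by
  rw [Finset.mul_sum]
  refine Finset.sum_eq_zero fun q hq => ?_
  rw [smul_single]
  exact single_mul_single_of_ne (h := ((hs q hq).1.trans_le (hs q hq).2).ne') ..

theorem exists_list_prod_eq_one_add_sum_smul_single (S : Finset (ι × ι))
    (hS : ∀ p ∈ S, p.1 < p.2) (a : ι × ι → R) :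
    ∃ L : List (Matrix ι ι R), L.length = S.card ∧
      (∀ M ∈ L, ∃ p ∈ S, ∃ l : R, M = 1 + l • single p.1 p.2 (1 : R)) ∧
      1 + ∑ p ∈ S, a p • single p.1 p.2 (1 : R) = L.prod := by
  induction S using Finset.induction_on_max_value (ι := ι × ι) (α := ι) (f := Prod.snd) with
  | empty => exact ⟨[], rfl, by simp, by simp⟩
  | insert p s hp hmax ih =>
    obtain ⟨L, hlen, hL, hprod⟩ := ih fun q hq => hS q (Finset.mem_insert_of_mem hq)
    refine ⟨(1 + a p • single p.1 p.2 (1 : R)) :: L, ?_, ?_, ?_⟩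
    · rw [List.length_cons, hlen, Finset.card_insert_of_notMem hp]
    · rintro M (_ | ⟨_, hM⟩)
      · exact ⟨p, Finset.mem_insert_self p s, a p, rfl⟩
      · obtain ⟨q, hq, l, rfl⟩ := hL M hM
        exact ⟨q, Finset.mem_insert_of_mem hq, l, rfl⟩
    · have hkill : a p • single p.1 p.2 (1 : R) * ∑ q ∈ s, a q • single q.1 q.2 (1 : R) = 0 := by
        rw [smul_single, single_mul_sum_smul_single_eq_zero]
        exact fun q hq => ⟨hS q (Finset.mem_insert_of_mem hq), hmax q hq⟩
      rw [Finset.sum_insert hp, List.prod_cons, ← hprod, one_add_mul_one_add_of_mul_eq_zero hkill]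

end

theorem subgroup_generated_by_elementaries_general {F : Type*} [Field F] {n : ℕ}
    (S : Finset (Fin n × Fin n)) (hS : ∀ p ∈ S, p.1 < p.2)
    (US : Set (Matrix (Fin n) (Fin n) F))
    (hUS : US = {X | ∃ a : Fin n × Fin n → F,
      X = 1 + ∑ p ∈ S, a p • Matrix.single p.1 p.2 (1 : F)}) :
    ∀ X ∈ US, ∃ L : List (Matrix (Fin n) (Fin n) F),
      L.length ≤ S.card ∧
      (∀ M ∈ L, ∃ p ∈ S, ∃ l : F, M = 1 + l • Matrix.single p.1 p.2 (1 : F)) ∧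
      X = L.prod := by
  subst hUS
  rintro _ ⟨a, rfl⟩
  obtain ⟨L, hlen, hL, hprod⟩ := exists_list_prod_eq_one_add_sum_smul_single S hS a
  exact ⟨L, hlen.le, hL, hprod⟩

/-- if U_S = {I + Σ_{(i,j)∈S} a_{ij} E_{ij}} is a subgroup of U_n,
every element of U_S is a product of at most |S| elementary matrices I + λE_{ij}
with (i,j) ∈ S. -/
theorem subgroup_generated_by_elementaries {F : Type*} [Field F] {n : ℕ}
    (S : Finset (Fin n × Fin n)) (hS : ∀ p ∈ S, p.1 < p.2)
    (US : Set (Matrix (Fin n) (Fin n) F))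
    (hUS : US = {X | ∃ a : Fin n × Fin n → F,
      X = 1 + ∑ p ∈ S, a p • Matrix.single p.1 p.2 (1 : F)})
    (hmul : ∀ X ∈ US, ∀ Y ∈ US, X * Y ∈ US)
    (hinv : ∀ X ∈ US, X⁻¹ ∈ US) :
    ∀ X ∈ US, ∃ L : List (Matrix (Fin n) (Fin n) F),
      L.length ≤ S.card ∧
      (∀ M ∈ L, ∃ p ∈ S, ∃ l : F, M = 1 + l • Matrix.single p.1 p.2 (1 : F)) ∧
      X = L.prod :=
  subgroup_generated_by_elementaries_general S hS US hUS
end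

section
/- For every n ≥ 6 and every r with r ≤ (1/2)·⌊(n−2)/3⌋·(⌊(n−2)/3⌋ − 1) when n ≡ 0 or 2 (mod 3), and r ≤ (1/2)·⌊(n−2)/3⌋·(⌊(n−2)/3⌋ − 1) − 1 when n ≡ 1 (mod 3), there exists a strictly upper triangular nilpotent n×n matrix A over F whose graph (vertex set [n], arcs at nonzero entries) is connected as an undirected graph, which satisfies A³ = 0 and A² ≠ 0, and whose graph has exactly n − 1 + r arcs. -/
/-- existence of connected 3-nilpotent strictly upper triangular
matrices whose graph has n - 1 + r arcs, for every admissible number r of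
parameters. -/
theorem exists_three_nilpotent_with_parameters {F : Type*} [Field F] {n r : ℕ}
    (hn : 6 ≤ n)
    (h02 : n % 3 = 0 ∨ n % 3 = 2 → 2 * r ≤ ((n - 2) / 3) * ((n - 2) / 3 - 1))
    (h1 : n % 3 = 1 → 2 * r + 2 ≤ ((n - 2) / 3) * ((n - 2) / 3 - 1)) :
    ∃ A : Matrix (Fin n) (Fin n) F,
      (∀ i j : Fin n, j ≤ i → A i j = 0) ∧
      A ^ 3 = 0 ∧ A ^ 2 ≠ 0 ∧
      (SimpleGraph.fromRel (fun i j => A i j ≠ 0)).Connected ∧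
      {p : Fin n × Fin n | A p.1 p.2 ≠ 0}.ncard = n - 1 + r := by
  classical
  set q : ℕ := (n - 2) / 3 with hq_def
  set c : ℕ := n - 1 - q with hc_def
  have hq1 : 1 ≤ q := by omega
  have hq2 : q ≤ n - 2 := by omega
  have hqc : q ≤ c := by omega
  have hc0 : 0 < c := by omega
  have h2r : 2 * r ≤ q * (q - 1) := by
    have h3 : n % 3 = 0 ∨ n % 3 = 1 ∨ n % 3 = 2 := by omega
    rcases h3 with h | h | h
    · exact h02 (Or.inl h)
    · have := h1 h; omega
    · exact h02 (Or.inr h)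
  have hrqc : r ≤ q * c := by
    have h1' : q * (q - 1) ≤ q * c := Nat.mul_le_mul_left q (by omega)
    omega
  -- the condition for an arc
  set P : Fin n → Fin n → Prop := fun i j =>
    (i.val < q ∧ j.val = q) ∨ (i.val = q ∧ q < j.val) ∨
    (i.val < q ∧ q < j.val ∧ i.val * c + (j.val - (q + 1)) < r) with hP_def
  set A : Matrix (Fin n) (Fin n) F := fun i j => if P i j then 1 else 0 with hA_def
  have hA : ∀ i j, A i j ≠ 0 ↔ P i j := by
    intro i j
    by_cases h : P i j
    · simp [hA_def, h]
    · simp [hA_def, h]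
  have hA1 : ∀ i j, P i j → A i j = 1 := by
    intro i j h; simp [hA_def, h]
  -- source / target facts
  have hsrc : ∀ i j : Fin n, A i j ≠ 0 → i.val ≤ q := by
    intro i j h
    rcases (hA i j).1 h with ⟨h, _⟩ | ⟨h, _⟩ | ⟨h, _, _⟩ <;> omega
  have htgt : ∀ i j : Fin n, A i j ≠ 0 → q ≤ j.val := by
    intro i j h
    rcases (hA i j).1 h with ⟨_, h⟩ | ⟨_, h⟩ | ⟨_, h, _⟩ <;> omega
  have hmid : ∀ j k : Fin n, A j k ≠ 0 → j.val = q → q < k.val := by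
    intro j k h hj
    rcases (hA j k).1 h with ⟨h, _⟩ | ⟨_, h⟩ | ⟨h, _, _⟩ <;> omega
  have hlt : ∀ i j : Fin n, A i j ≠ 0 → i.val < j.val := by
    intro i j h
    rcases (hA i j).1 h with ⟨h1, h2⟩ | ⟨h1, h2⟩ | ⟨h1, h2, _⟩ <;> omega
  have qlt : q < n := by omega
  set qv : Fin n := ⟨q, qlt⟩ with hqv_def
  refine ⟨A, ?_, ?_, ?_, ?_, ?_⟩
  -- strictly upper triangular
  · intro i j hji
    by_contra h
    have h1' := hlt i j h
    have h2' : j.val ≤ i.val := hji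
    omega
  -- A ^ 3 = 0
  · ext i l
    rw [pow_succ, pow_succ, pow_one]
    rw [Matrix.mul_apply, Matrix.zero_apply]
    apply Finset.sum_eq_zero
    intro k _
    by_cases hkl : A k l = 0
    · rw [hkl, mul_zero]
    · have hk : k.val ≤ q := hsrc k l hkl
      have hz : (A * A) i k = 0 := by
        rw [Matrix.mul_apply]
        apply Finset.sum_eq_zero
        intro j _
        by_cases h1' : A i j = 0
        · rw [h1', zero_mul]
        · by_cases h2' : A j k = 0
          · rw [h2', mul_zero]
          · exfalso
            have hj1 : q ≤ j.val := htgt i j h1'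
            have hj2 : j.val ≤ q := hsrc j k h2'
            have hjq : j.val = q := le_antisymm hj2 hj1
            have := hmid j k h2' hjq
            omega
      rw [hz, zero_mul]
  -- A ^ 2 ≠ 0
  · have i0lt : 0 < n := by omega
    have lnlt : n - 1 < n := by omega
    set i0 : Fin n := ⟨0, i0lt⟩ with hi0
    set ln : Fin n := ⟨n - 1, lnlt⟩ with hln
    have key : (A ^ 2) i0 ln = 1 := by
      rw [pow_two, Matrix.mul_apply]
      rw [Finset.sum_eq_single qv]
      · have e1 : A i0 qv = 1 := hA1 _ _ (Or.inl ⟨show (0:ℕ) < q by omega, rfl⟩)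
        have e2 : A qv ln = 1 :=
          hA1 _ _ (Or.inr (Or.inl ⟨rfl, show q < n - 1 by omega⟩))
        rw [e1, e2, one_mul]
      · intro b _ hb
        by_cases h1' : A i0 b = 0
        · rw [h1', zero_mul]
        · rcases (hA i0 b).1 h1' with ⟨_, h⟩ | ⟨h, _⟩ | ⟨_, h, _⟩
          · exact absurd (Fin.ext h : b = qv) hb
          · exfalso; have h0 : (0 : ℕ) = q := h; omega
          · have hz : A b ln = 0 := by
              by_contra hc'
              have := hsrc b ln hc'
              omega
            rw [hz, mul_zero]
      · intro h
        exact absurd (Finset.mem_univ qv) h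
    intro h
    rw [h, Matrix.zero_apply] at key
    exact one_ne_zero key.symm
  -- connected
  · have hadj : ∀ v : Fin n, v ≠ qv →
        (SimpleGraph.fromRel (fun i j => A i j ≠ 0)).Adj v qv := by
      intro v hv
      rw [SimpleGraph.fromRel_adj]
      refine ⟨hv, ?_⟩
      have hvq : v.val ≠ q := fun h' => hv (Fin.ext h')
      by_cases h : v.val < q
      · left
        rw [hA]
        exact Or.inl ⟨h, rfl⟩
      · right
        rw [hA]
        exact Or.inr (Or.inl ⟨rfl, by omega⟩)
    haveI : Nonempty (Fin n) := ⟨qv⟩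
    refine ⟨?_⟩
    intro u v
    have r1 : (SimpleGraph.fromRel (fun i j => A i j ≠ 0)).Reachable u qv := by
      by_cases h : u = qv
      · rw [h]
      · exact (hadj u h).reachable
    have r2 : (SimpleGraph.fromRel (fun i j => A i j ≠ 0)).Reachable v qv := by
      by_cases h : v = qv
      · rw [h]
      · exact (hadj v h).reachable
    exact r1.trans r2.symm
  -- cardinality
  · have hset : {p : Fin n × Fin n | A p.1 p.2 ≠ 0} =
        ↑(Finset.univ.filter (fun p : Fin n × Fin n => P p.1 p.2)) := by
      ext p
      simp only [Set.mem_setOf_eq, Finset.mem_coe, Finset.mem_filter, Finset.mem_univ,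
        true_and]
      exact hA p.1 p.2
    rw [hset, Set.ncard_coe_finset]
    have hfilter : (Finset.univ.filter (fun p : Fin n × Fin n => P p.1 p.2)) =
        (Finset.univ.filter (fun p : Fin n × Fin n => p.1.val < q ∧ p.2.val = q)) ∪
        ((Finset.univ.filter (fun p : Fin n × Fin n => p.1.val = q ∧ q < p.2.val)) ∪
         (Finset.univ.filter (fun p : Fin n × Fin n =>
            p.1.val < q ∧ q < p.2.val ∧ p.1.val * c + (p.2.val - (q + 1)) < r))) := by
      rw [← Finset.filter_or, ← Finset.filter_or]
    rw [hfilter]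
    have hd1 : Disjoint
        (Finset.univ.filter (fun p : Fin n × Fin n => p.1.val < q ∧ p.2.val = q))
        ((Finset.univ.filter (fun p : Fin n × Fin n => p.1.val = q ∧ q < p.2.val)) ∪
         (Finset.univ.filter (fun p : Fin n × Fin n =>
            p.1.val < q ∧ q < p.2.val ∧ p.1.val * c + (p.2.val - (q + 1)) < r))) := by
      rw [Finset.disjoint_left]
      intro p h1' h2'
      simp only [Finset.mem_filter, Finset.mem_univ, true_and, Finset.mem_union] at h1' h2'
      rcases h2' with h2' | h2' <;> omega
    have hd2 : Disjoint
        (Finset.univ.filter (fun p : Fin n × Fin n => p.1.val = q ∧ q < p.2.val))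
        (Finset.univ.filter (fun p : Fin n × Fin n =>
            p.1.val < q ∧ q < p.2.val ∧ p.1.val * c + (p.2.val - (q + 1)) < r)) := by
      rw [Finset.disjoint_left]
      intro p h1' h2'
      simp only [Finset.mem_filter, Finset.mem_univ, true_and] at h1' h2'
      omega
    rw [Finset.card_union_of_disjoint hd1, Finset.card_union_of_disjoint hd2]
    have hcard1 : (Finset.univ.filter
        (fun p : Fin n × Fin n => p.1.val < q ∧ p.2.val = q)).card = q := by
      have h : (Finset.univ.filter
          (fun p : Fin n × Fin n => p.1.val < q ∧ p.2.val = q)).card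
          = (Finset.range q).card := by
        refine Finset.card_bij' (fun p _ => p.1.val)
          (fun t ht => ((⟨t, by simp only [Finset.mem_range] at ht; omega⟩ : Fin n), qv))
          ?_ ?_ ?_ ?_
        · intro p hp
          simp only [Finset.mem_filter, Finset.mem_univ, true_and] at hp
          exact Finset.mem_range.2 hp.1
        · intro t ht
          have ht' : t < q := Finset.mem_range.1 ht
          exact Finset.mem_filter.2 ⟨Finset.mem_univ _, show t < q from ht', rfl⟩
        · intro p hp
          simp only [Finset.mem_filter, Finset.mem_univ, true_and] at hp
          obtain ⟨⟨p1, hp1⟩, ⟨p2, hp2⟩⟩ := p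
          have h2' : p2 = q := hp.2
          exact Prod.ext (Fin.ext rfl) (Fin.ext h2'.symm)
        · intro t ht
          rfl
      rw [h, Finset.card_range]
    have hcard2 : (Finset.univ.filter
        (fun p : Fin n × Fin n => p.1.val = q ∧ q < p.2.val)).card = c := by
      have h : (Finset.univ.filter
          (fun p : Fin n × Fin n => p.1.val = q ∧ q < p.2.val)).card
          = (Finset.range c).card := by
        refine Finset.card_bij' (fun p _ => p.2.val - (q + 1))
          (fun t ht =>
            (qv, (⟨q + 1 + t, by simp only [Finset.mem_range] at ht; omega⟩ : Fin n)))
          ?_ ?_ ?_ ?_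
        · intro p hp
          simp only [Finset.mem_filter, Finset.mem_univ, true_and] at hp
          have hlt2 := p.2.isLt
          refine Finset.mem_range.2 ?_
          show p.2.val - (q + 1) < c
          omega
        · intro t ht
          have ht' : t < c := Finset.mem_range.1 ht
          exact Finset.mem_filter.2
            ⟨Finset.mem_univ _, rfl, show q < q + 1 + t by omega⟩
        · intro p hp
          simp only [Finset.mem_filter, Finset.mem_univ, true_and] at hp
          obtain ⟨⟨p1, hp1⟩, ⟨p2, hp2⟩⟩ := p
          have h1' : p1 = q := hp.1
          have h2' : q < p2 := hp.2
          exact Prod.ext (Fin.ext h1'.symm)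
            (Fin.ext (show q + 1 + (p2 - (q + 1)) = p2 by omega))
        · intro t ht
          have ht' : t < c := Finset.mem_range.1 ht
          show q + 1 + t - (q + 1) = t
          omega
      rw [h, Finset.card_range]
    have hcard3 : (Finset.univ.filter (fun p : Fin n × Fin n =>
        p.1.val < q ∧ q < p.2.val ∧ p.1.val * c + (p.2.val - (q + 1)) < r)).card = r := by
      have h : (Finset.univ.filter (fun p : Fin n × Fin n =>
          p.1.val < q ∧ q < p.2.val ∧ p.1.val * c + (p.2.val - (q + 1)) < r)).card
          = (Finset.range r).card := by
        refine Finset.card_bij' (fun p _ => p.1.val * c + (p.2.val - (q + 1)))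
          (fun t ht =>
            ((⟨t / c, by
              simp only [Finset.mem_range] at ht
              have := (Nat.div_lt_iff_lt_mul hc0).2 (lt_of_lt_of_le ht hrqc)
              omega⟩ : Fin n),
             (⟨q + 1 + t % c, by
              have := Nat.mod_lt t hc0
              omega⟩ : Fin n)))
          ?_ ?_ ?_ ?_
        · intro p hp
          simp only [Finset.mem_filter, Finset.mem_univ, true_and] at hp
          exact Finset.mem_range.2 hp.2.2
        · intro t ht
          have ht' : t < r := Finset.mem_range.1 ht
          have hdc : t / c < q := (Nat.div_lt_iff_lt_mul hc0).2 (lt_of_lt_of_le ht' hrqc)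
          have hsum : t / c * c + (q + 1 + t % c - (q + 1)) < r := by
            have heq : q + 1 + t % c - (q + 1) = t % c := by omega
            rw [heq, mul_comm, Nat.div_add_mod]
            exact ht'
          exact Finset.mem_filter.2
            ⟨Finset.mem_univ _, hdc, show q < q + 1 + t % c by omega, hsum⟩
        · intro p hp
          simp only [Finset.mem_filter, Finset.mem_univ, true_and] at hp
          obtain ⟨⟨p1, hp1⟩, ⟨p2, hp2⟩⟩ := p
          have h1' : p1 < q := hp.1
          have h2' : q < p2 := hp.2.1
          have h3' : p1 * c + (p2 - (q + 1)) < r := hp.2.2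
          have hd : p2 - (q + 1) < c := by omega
          have hdiv : (p1 * c + (p2 - (q + 1))) / c = p1 := by
            rw [mul_comm, Nat.mul_add_div hc0, Nat.div_eq_of_lt hd, add_zero]
          have hmod : (p1 * c + (p2 - (q + 1))) % c = p2 - (q + 1) := by
            rw [mul_comm, Nat.mul_add_mod, Nat.mod_eq_of_lt hd]
          refine Prod.ext (Fin.ext ?_) (Fin.ext ?_)
          · exact hdiv
          · show q + 1 + (p1 * c + (p2 - (q + 1))) % c = p2
            rw [hmod]; omega
        · intro t ht
          have ht' : t < r := Finset.mem_range.1 ht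
          show t / c * c + (q + 1 + t % c - (q + 1)) = t
          have heq : q + 1 + t % c - (q + 1) = t % c := by omega
          rw [heq, mul_comm, Nat.div_add_mod]
      rw [h, Finset.card_range]
    rw [hcard1, hcard2, hcard3]
    omega
end
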